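/- arXiv:2506.03960 — 6 statements merged into one kernel-verified Lean document; each statement's English description precedes it below -/
import Mathlib

section
/- For every integer d ≥ 1 there exists a constant C > 0 such that the following holds for all integers n ≥ m ≥ 1: given n closed halfspaces in ℝ^d, each assigned one of m colors, and letting P_j be the intersection of the halfspaces of color j (with P_j = ℝ^d if color class j is empty), the set of vertices of the subdivision induced by P_1, …, P_m is finite and has cardinality at most C · m^⌈d/2⌉ · n^⌊d/2⌋. -/
open Set

/-- A closed halfspace: `{x | f x ≤ a}` for a nonzero linear functional `f`. -/
def IsClosedHalfspace (V : Type*) [AddCommGroup V] [Module ℝ V] (h : Set V) : Prop :=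
  ∃ (f : V →ₗ[ℝ] ℝ) (a : ℝ), f ≠ 0 ∧ h = {x | f x ≤ a}

/-- A convex polyhedron: the intersection of finitely many closed halfspaces. -/
def IsPolyhedron (V : Type*) [AddCommGroup V] [Module ℝ V] (P : Set V) : Prop :=
  ∃ (k : ℕ) (H : Fin k → Set V), (∀ i, IsClosedHalfspace V (H i)) ∧ P = ⋂ i, H i

/-- `minFace P p` is the intersection of `P` with all hyperplanes `{x | f x = a}`
(`f` a nonzero linear functional) such that `f p = a` and `P ⊆ {x | f x ≤ a}`;
this is the face `F(p)` of `P` at `p`.  If there is no such hyperplane, it is `P`. -/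
def minFace {V : Type*} [AddCommGroup V] [Module ℝ V] (P : Set V) (p : V) : Set V :=
  P ∩ ⋂ (f : V →ₗ[ℝ] ℝ) (a : ℝ) (_ : f ≠ 0) (_ : f p = a) (_ : P ⊆ {x | f x ≤ a}),
    {x | f x = a}

/-- `p` is a vertex of the subdivision induced by the polyhedra `P j`:
the intersection of the faces `minFace (P j) p`, over all `j` with `p ∈ P j`,
equals `{p}`. -/
def IsSubdivVertex {V : Type*} [AddCommGroup V] [Module ℝ V] {ι : Type*}
    (P : ι → Set V) (p : V) : Prop :=
  (⋂ j ∈ {j | p ∈ P j}, minFace (P j) p) = {p}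

namespace SubdivProofAux


/-- `v` is lexicographically nonnegative. -/
def LexNN {d : ℕ} (v : Fin d → ℝ) : Prop := ∀ k, (∀ l, l < k → v l = 0) → 0 ≤ v k

lemma lexNN_zero {d : ℕ} : LexNN (0 : Fin d → ℝ) := fun _ _ => le_refl _

lemma lexNN_add {d : ℕ} {v w : Fin d → ℝ} (hv : LexNN v) (hw : LexNN w) :
    LexNN (v + w) := by
  have key : ∀ N : ℕ, ∀ l : Fin d, (l : ℕ) < N → (∀ l', l' ≤ l → (v + w) l' = 0) →
      v l = 0 ∧ w l = 0 := by
    intro N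
    induction N with
    | zero => intro l hl; omega
    | succ N ih =>
      intro l hl hz
      have hvl : ∀ l', l' < l → v l' = 0 ∧ w l' = 0 := by
        intro l' hl'
        exact ih l' (by omega) (fun l'' h'' => hz l'' (le_trans h'' hl'.le))
      have h1 : 0 ≤ v l := hv l (fun l' h => (hvl l' h).1)
      have h2 : 0 ≤ w l := hw l (fun l' h => (hvl l' h).2)
      have h3 : v l + w l = 0 := hz l le_rfl
      constructor <;> linarith
  intro k hk
  have hz : ∀ l, l < k → v l = 0 ∧ w l = 0 := by
    intro l hl
    exact key ((l : ℕ) + 1) l (by omega) (fun l' h' => hk l' (lt_of_le_of_lt h' hl))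
  have h1 : 0 ≤ v k := hv k (fun l h => (hz l h).1)
  have h2 : 0 ≤ w k := hw k (fun l h => (hz l h).2)
  have : (v + w) k = v k + w k := rfl
  rw [this]; linarith

lemma lexNN_smul {d : ℕ} {c : ℝ} {v : Fin d → ℝ} (hc : 0 ≤ c) (hv : LexNN v) :
    LexNN (c • v) := by
  rcases eq_or_lt_of_le hc with h | h
  · intro k hk
    show 0 ≤ c * v k
    rw [← h, zero_mul]
  · intro k hk
    have : ∀ l, l < k → v l = 0 := by
      intro l hl
      have := hk l hl
      have hcv : c * v l = 0 := this
      exact (mul_eq_zero.mp hcv).resolve_left (ne_of_gt h)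
    have := hv k this
    show 0 ≤ c * v k
    positivity

lemma lexNN_total {d : ℕ} (v : Fin d → ℝ) : LexNN v ∨ LexNN (-v) := by
  by_cases h : LexNN v
  · exact Or.inl h
  · right
    rw [LexNN] at h
    push_neg at h
    obtain ⟨k, hk, hkneg⟩ := h
    intro k' h'
    rcases lt_trichotomy k' k with hlt | heq | hgt
    · have : v k' = 0 := hk k' hlt
      show 0 ≤ -v k'
      rw [this]; norm_num
    · subst heq
      show 0 ≤ -v k'
      linarith
    · exfalso
      have : -v k = 0 := h' k hgt
      have : v k = 0 := by linarith [neg_eq_zero.mp this]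
      linarith

lemma lexNN_antisymm {d : ℕ} {v : Fin d → ℝ} (h1 : LexNN v) (h2 : LexNN (-v)) :
    v = 0 := by
  classical
  by_contra hv
  have hne : ∃ k, v k ≠ 0 := Function.ne_iff.mp hv
  set s : Finset (Fin d) := Finset.univ.filter (fun k => v k ≠ 0) with hs
  have hsne : s.Nonempty := by
    obtain ⟨k, hk⟩ := hne
    exact ⟨k, by simp [hs, hk]⟩
  set k0 := s.min' hsne with hk0
  have hmin : ∀ l, l < k0 → v l = 0 := by
    intro l hl
    by_contra hvl
    have : l ∈ s := by simp [hs, hvl]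
    have h := s.min'_le l this
    rw [← hk0] at h
    exact absurd hl (not_lt.mpr h)
  have hk0s : k0 ∈ s := s.min'_mem hsne
  have hk0ne : v k0 ≠ 0 := by simpa [hs] using hk0s
  have ha : 0 ≤ v k0 := h1 k0 hmin
  have hb : 0 ≤ -v k0 := h2 k0 (fun l hl => by
    show -v l = 0
    rw [hmin l hl]; ring)
  have : v k0 = 0 := le_antisymm (by linarith) ha
  exact hk0ne this

lemma lexNN_sum {d : ℕ} {ι : Type*} (s : Finset ι) (f : ι → Fin d → ℝ)
    (h : ∀ i ∈ s, LexNN (f i)) : LexNN (∑ i ∈ s, f i) := by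
  classical
  induction s using Finset.induction_on with
  | empty => simpa using lexNN_zero
  | insert _ _ hx ih =>
    rw [Finset.sum_insert hx]
    exact lexNN_add (h _ (Finset.mem_insert_self _ _))
      (ih fun i hi => h i (Finset.mem_insert_of_mem hi))



variable {d n m : ℕ}

/-- The polyhedron of color `j`. -/
def Pcol (F : Fin n → Module.Dual ℝ (Fin d → ℝ)) (a : Fin n → ℝ)
    (color : Fin n → Fin m) (j : Fin m) : Set (Fin d → ℝ) :=
  ⋂ i ∈ {i | color i = j}, {x | F i x ≤ a i}

/-- The feasible set of a certificate. -/
def Wcert (F : Fin n → Module.Dual ℝ (Fin d → ℝ)) (a : Fin n → ℝ)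
    (color : Fin n → Fin m)
    (s : Fin ((d + 1) / 2) → Fin m) (tv : Fin (d / 2) → Fin n) : Set (Fin d → ℝ) :=
  (⋂ j ∈ Set.range s, Pcol F a color j) ∩ ⋂ l, {x | F (tv l) x = a (tv l)}

/-- `p` is certified by `c`. -/
def IsCert (F : Fin n → Module.Dual ℝ (Fin d → ℝ)) (a : Fin n → ℝ)
    (color : Fin n → Fin m) (p : Fin d → ℝ)
    (c : Bool × (Fin ((d + 1) / 2) → Fin m) × (Fin (d / 2) → Fin n)) : Prop :=
  p ∈ Wcert F a color c.2.1 c.2.2 ∧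
    ∀ q ∈ Wcert F a color c.2.1 c.2.2, LexNN (if c.1 then p - q else q - p)

lemma cert_unique {F : Fin n → Module.Dual ℝ (Fin d → ℝ)} {a : Fin n → ℝ}
    {color : Fin n → Fin m} {p q : Fin d → ℝ}
    {c : Bool × (Fin ((d + 1) / 2) → Fin m) × (Fin (d / 2) → Fin n)}
    (hp : IsCert F a color p c) (hq : IsCert F a color q c) : p = q := by
  have h1 := hp.2 q hq.1
  have h2 := hq.2 p hp.1
  cases hc : c.1
  · rw [hc, if_neg (by simp)] at h1 h2
    have := lexNN_antisymm h2 (by rw [neg_sub]; exact h1)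
    exact sub_eq_zero.mp this
  · rw [hc, if_pos rfl] at h1 h2
    have := lexNN_antisymm h1 (by rw [neg_sub]; exact h2)
    exact sub_eq_zero.mp this

lemma exists_cert (hm1 : 1 ≤ m) (hnm : m ≤ n)
    (F : Fin n → Module.Dual ℝ (Fin d → ℝ)) (a : Fin n → ℝ)
    (color : Fin n → Fin m) (p : Fin d → ℝ)
    (hvert : IsSubdivVertex (Pcol F a color) p) :
    ∃ c, IsCert F a color p c := by
  classical
  set P : Fin m → Set (Fin d → ℝ) := Pcol F a color with hP
  set J : Set (Fin m) := {j | p ∈ P j} with hJ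
  set A : Set (Fin n) := {i | color i ∈ J ∧ F i p = a i} with hA
  have hpH : ∀ i : Fin n, color i ∈ J → F i p ≤ a i := by
    intro i hi
    have hp : p ∈ P (color i) := hi
    have := Set.mem_iInter₂.mp hp i rfl
    exact this
  -- Step 1: no nonzero vector annihilates all tight active constraints
  have hns : ∀ v : Fin d → ℝ, (∀ i, i ∈ A → F i v = 0) → v = 0 := by
    intro v hv
    by_contra hv0
    have hn0 : 0 < n := lt_of_lt_of_le hm1 hnm
    haveI : Nonempty (Fin n) := ⟨⟨0, hn0⟩⟩
    set δ : Fin n → ℝ := fun i =>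
      if F i v = 0 ∨ color i ∉ J then 1 else (a i - F i p) / |F i v| with hδ
    have hδpos : ∀ i, 0 < δ i := by
      intro i
      by_cases h : F i v = 0 ∨ color i ∉ J
      · simp [hδ, h]
      · push_neg at h
        have hiA : i ∉ A := fun hiA => h.1 (hv i hiA)
        have hslack : F i p < a i := by
          rcases lt_or_eq_of_le (hpH i h.2) with h' | h'
          · exact h'
          · exact absurd ⟨h.2, h'⟩ hiA
        have hδi : δ i = (a i - F i p) / |F i v| := by
          rw [hδ]; simp only [h.1, h.2, not_true_eq_false, or_self, if_false]
        rw [hδi]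
        exact div_pos (by linarith) (abs_pos.mpr h.1)
    set ε : ℝ := Finset.univ.inf' Finset.univ_nonempty δ with hε
    have hεpos : 0 < ε := by
      rw [hε, Finset.lt_inf'_iff]
      exact fun i _ => hδpos i
    have hεle : ∀ i, ε ≤ δ i := fun i => Finset.inf'_le _ (Finset.mem_univ i)
    have hmem : ∀ s : ℝ, |s| ≤ ε → ∀ j ∈ J, p + s • v ∈ P j := by
      intro s hs j hj
      refine Set.mem_iInter₂.mpr fun i hi => ?_
      show F i (p + s • v) ≤ a i
      rw [map_add, map_smul, smul_eq_mul]
      have hJi : color i ∈ J := by rw [hi]; exact hj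
      by_cases h0 : F i v = 0
      · rw [h0, mul_zero, add_zero]
        exact hpH i hJi
      · have hδi : δ i = (a i - F i p) / |F i v| := by
          rw [hδ]; simp only [h0, hJi, not_true_eq_false, or_self, if_false]
        have h1 : |s * F i v| ≤ ((a i - F i p) / |F i v|) * |F i v| := by
          rw [abs_mul]
          apply mul_le_mul_of_nonneg_right _ (abs_nonneg _)
          calc |s| ≤ ε := hs
            _ ≤ δ i := hεle i
            _ = _ := hδi
        rw [div_mul_cancel₀ _ (ne_of_gt (abs_pos.mpr h0))] at h1
        have := le_abs_self (s * F i v)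
        linarith
    have hface : ∀ s : ℝ, |s| ≤ ε → p + s • v ∈ ⋂ j ∈ {j | p ∈ P j}, minFace (P j) p := by
      intro s hs
      refine Set.mem_iInter₂.mpr fun j hj => ?_
      refine ⟨hmem s hs j hj, ?_⟩
      refine Set.mem_iInter.mpr fun f => Set.mem_iInter.mpr fun b =>
        Set.mem_iInter.mpr fun hf0 => Set.mem_iInter.mpr fun hfb =>
        Set.mem_iInter.mpr fun hsub => ?_
      show f (p + s • v) = b
      have h1 : f (p + s • v) ≤ b := hsub (hmem s hs j hj)
      have h2 : f (p + (-s) • v) ≤ b := hsub (hmem (-s) (by rwa [abs_neg]) j hj)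
      rw [map_add, map_smul, smul_eq_mul] at h1 h2
      rw [map_add, map_smul, smul_eq_mul]
      rw [hfb] at h1 h2 ⊢
      linarith
    have h1 := hface ε (le_of_eq (abs_of_pos hεpos))
    rw [IsSubdivVertex] at hvert
    rw [hvert] at h1
    have h2 : p + ε • v = p := h1
    have h3 : ε • v = 0 := by
      have := congrArg (fun x => x - p) h2
      simpa using this
    rcases smul_eq_zero.mp h3 with h | h
    · exact absurd h (ne_of_gt hεpos)
    · exact hv0 h
  -- Step 2: the tight active functionals span the dual space
  have hspan : Submodule.span ℝ (F '' A) = ⊤ := by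
    have hco : (Submodule.span ℝ (F '' A)).dualCoannihilator = ⊥ := by
      rw [Submodule.eq_bot_iff]
      intro x hx
      rw [Submodule.mem_dualCoannihilator] at hx
      exact hns x (fun i hi => hx (F i) (Submodule.subset_span (Set.mem_image_of_mem F hi)))
    have hfin := Subspace.finrank_add_finrank_dualCoannihilator_eq (Submodule.span ℝ (F '' A))
    rw [hco, finrank_bot] at hfin
    apply Submodule.eq_top_of_finrank_eq
    rw [Subspace.dual_finrank_eq]
    omega
  -- Step 3: extract a basis indexed by `Fin d` from tight active functionals
  obtain ⟨e, bb, hbbF, heA⟩ :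
      ∃ (e : Fin d → Fin n) (bb : Module.Basis (Fin d) ℝ (Module.Dual ℝ (Fin d → ℝ))),
        (∀ k, bb k = F (e k)) ∧ (∀ k, e k ∈ A) := by
    obtain ⟨sB, hsub, hsp2, hli⟩ := exists_linearIndependent ℝ (F '' A)
    rw [hspan] at hsp2
    have hfinB : sB.Finite := LinearIndependent.setFinite hli
    haveI : Fintype sB := hfinB.fintype
    have hdD : Module.finrank ℝ (Module.Dual ℝ (Fin d → ℝ)) = d := by
      rw [Subspace.dual_finrank_eq, Module.finrank_pi, Fintype.card_fin]
    have hcard : Fintype.card sB = d := by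
      have h1 : Fintype.card sB ≤ d := by
        have h := LinearIndependent.fintype_card_le_finrank hli
        rw [hdD] at h
        exact le_trans (le_of_eq (Fintype.card_congr (Equiv.refl _))) h
      have h2 : d ≤ sB.toFinset.card := by
        have := finrank_span_le_card (R := ℝ) sB
        rw [hsp2] at this
        rw [finrank_top] at this
        omega
      rw [Set.toFinset_card] at h2
      omega
    let es := Fintype.equivFinOfCardEq hcard
    have hli2 : LinearIndependent ℝ
        (fun k : Fin d => (es.symm k : Module.Dual ℝ (Fin d → ℝ))) :=
      hli.comp es.symm es.symm.injective
    have hrange : (Set.range fun k : Fin d =>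
        (es.symm k : Module.Dual ℝ (Fin d → ℝ))) = sB := by
      have : (fun k : Fin d => (es.symm k : Module.Dual ℝ (Fin d → ℝ)))
          = Subtype.val ∘ es.symm := rfl
      rw [this, Set.range_comp, Equiv.range_eq_univ, Set.image_univ,
        Subtype.range_coe]
    have hsp3 : ⊤ ≤ Submodule.span ℝ (Set.range fun k : Fin d =>
        (es.symm k : Module.Dual ℝ (Fin d → ℝ))) := by
      rw [hrange, hsp2]
    let bb := Module.Basis.mk hli2 hsp3
    have hex : ∀ k : Fin d, ∃ i, i ∈ A ∧ F i = bb k := by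
      intro k
      have hmem : (bb k : Module.Dual ℝ (Fin d → ℝ)) ∈ sB := by
        have : bb k = (es.symm k : Module.Dual ℝ (Fin d → ℝ)) := Module.Basis.mk_apply _ _ _
        rw [this]
        exact (es.symm k).2
      obtain ⟨i, hiA, hiF⟩ := hsub hmem
      exact ⟨i, hiA, hiF⟩
    choose e he1 he2 using hex
    exact ⟨e, bb, fun k => (he2 k).symm, he1⟩
  -- Step 4: dual vectors
  obtain ⟨g, hg⟩ : ∃ g : Fin d → (Fin d → ℝ), ∀ l k, bb l (g k) = if l = k then 1 else 0 := by
    refine ⟨fun k => (Module.evalEquiv ℝ (Fin d → ℝ)).symm (bb.dualBasis k), fun l k => ?_⟩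
    rw [Module.apply_evalEquiv_symm_apply, Module.Basis.dualBasis_apply_self]
  have hexp : ∀ w : Fin d → ℝ, w = ∑ k, bb k w • g k := by
    intro w
    have key : ∀ φ : Module.Dual ℝ (Fin d → ℝ), φ (w - ∑ k, bb k w • g k) = 0 := by
      intro φ
      have hφ : φ ∈ Submodule.span ℝ (Set.range bb) := by
        rw [Module.Basis.span_eq]; trivial
      induction hφ using Submodule.span_induction with
      | mem x hx =>
        obtain ⟨l, rfl⟩ := hx
        rw [map_sub, map_sum]
        simp only [map_smul, smul_eq_mul, hg, mul_ite, mul_one, mul_zero]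
        rw [Finset.sum_ite_eq Finset.univ l (fun k => bb k w)]
        simp
      | zero => simp
      | add x y hx hy ihx ihy =>
        rw [LinearMap.add_apply, ihx, ihy, add_zero]
      | smul c x hx ihx =>
        rw [LinearMap.smul_apply, ihx, smul_zero]
    have h0 := (Module.forall_dual_apply_eq_zero_iff ℝ (w - ∑ k, bb k w • g k)).mp key
    exact (sub_eq_zero.mp h0)
  -- Step 5: sign selection
  obtain ⟨σ, U, hUcard, hsign⟩ :
      ∃ (σ : Bool) (U : Finset (Fin d)), U.card = (d + 1) / 2 ∧
        ∀ k ∈ U, LexNN (if σ then g k else -g k) := by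
    by_cases hc : (d + 1) / 2 ≤ (Finset.univ.filter (fun k => LexNN (g k))).card
    · obtain ⟨U, hU, hUc⟩ := Finset.exists_subset_card_eq hc
      refine ⟨true, U, hUc, fun k hk => ?_⟩
      have := (Finset.mem_filter.mp (hU hk)).2
      simpa using this
    · have hcompl : (d + 1) / 2 ≤
          (Finset.univ \ Finset.univ.filter (fun k => LexNN (g k))).card := by
        rw [Finset.card_sdiff_of_subset (Finset.filter_subset _ _)]
        rw [Finset.card_univ, Fintype.card_fin]
        omega
      obtain ⟨U, hU, hUc⟩ := Finset.exists_subset_card_eq hcompl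
      refine ⟨false, U, hUc, fun k hk => ?_⟩
      have hk2 := hU hk
      rw [Finset.mem_sdiff, Finset.mem_filter] at hk2
      have hnl : ¬ LexNN (g k) := fun h => hk2.2 ⟨Finset.mem_univ k, h⟩
      simpa using (lexNN_total (g k)).resolve_left hnl
  -- Step 6: build the certificate
  set Tk : Finset (Fin d) := Uᶜ with hTk
  have hTcard : Tk.card = d / 2 := by
    rw [hTk, Finset.card_compl, hUcard, Fintype.card_fin]; omega
  set isoU := U.orderIsoOfFin hUcard with hisoU
  set isoT := Tk.orderIsoOfFin hTcard with hisoT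
  refine ⟨(σ, fun l => color (e (isoU l)), fun l => e (isoT l)), ⟨?_, ?_⟩, ?_⟩
  · -- p belongs to the selected polyhedra
    refine Set.mem_iInter₂.mpr fun j hj => ?_
    obtain ⟨l, rfl⟩ := hj
    exact (heA ((isoU l : { x // x ∈ U }) : Fin d)).1
  · -- p satisfies the selected equations
    refine Set.mem_iInter.mpr fun l => ?_
    exact (heA ((isoT l : { x // x ∈ Tk }) : Fin d)).2
  · -- p lexicographically dominates all of W
    intro q hq
    obtain ⟨hq1, hq2⟩ := hq
    have hver : ∀ k ∈ U, bb k (q - p) ≤ 0 := by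
      intro k hk
      have hl : ∃ l, (isoU l : Fin d) = k := ⟨isoU.symm ⟨k, hk⟩, by simp⟩
      obtain ⟨l, hl⟩ := hl
      have hqP : q ∈ Pcol F a color (color (e (isoU l))) :=
        Set.mem_iInter₂.mp hq1 _ ⟨l, rfl⟩
      have hqi : F (e (isoU l)) q ≤ a (e (isoU l)) :=
        Set.mem_iInter₂.mp hqP (e (isoU l)) rfl
      have hpi : F (e (isoU l)) p = a (e (isoU l)) := (heA _).2
      rw [← hl, hbbF, map_sub]
      rw [hpi]
      linarith
    have hzer : ∀ k ∈ Tk, bb k (q - p) = 0 := by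
      intro k hk
      have hl : ∃ l, (isoT l : Fin d) = k := ⟨isoT.symm ⟨k, hk⟩, by simp⟩
      obtain ⟨l, hl⟩ := hl
      have hqi : F (e (isoT l)) q = a (e (isoT l)) := Set.mem_iInter.mp hq2 l
      have hpi : F (e (isoT l)) p = a (e (isoT l)) := (heA _).2
      rw [← hl, hbbF, map_sub, hqi, hpi, sub_self]
    have hrep : q - p = ∑ k ∈ U, bb k (q - p) • g k := by
      calc q - p = ∑ k, bb k (q - p) • g k := hexp _
        _ = ∑ k ∈ U, bb k (q - p) • g k := by
            refine (Finset.sum_subset (Finset.subset_univ U) ?_).symm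
            intro k _ hk
            have hkT : k ∈ Tk := by rw [hTk, Finset.mem_compl]; exact hk
            rw [hzer k hkT, zero_smul]
    cases σ with
    | true =>
      show LexNN (if true then p - q else q - p)
      rw [if_pos rfl]
      have hpq : p - q = ∑ k ∈ U, (-(bb k (q - p))) • g k := by
        conv_lhs => rw [← neg_sub q p, hrep]
        rw [← Finset.sum_neg_distrib]
        apply Finset.sum_congr rfl
        intro k _
        rw [neg_smul]
      rw [hpq]
      refine lexNN_sum _ _ fun k hk => ?_
      refine lexNN_smul (by linarith [hver k hk]) ?_
      simpa using hsign k hk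
    | false =>
      show LexNN (if false then p - q else q - p)
      rw [if_neg (by simp)]
      have hqp : q - p = ∑ k ∈ U, (-(bb k (q - p))) • (-(g k)) := by
        conv_lhs => rw [hrep]
        apply Finset.sum_congr rfl
        intro k _
        rw [neg_smul_neg]
      rw [hqp]
      refine lexNN_sum _ _ fun k hk => ?_
      refine lexNN_smul (by linarith [hver k hk]) ?_
      simpa using hsign k hk

end SubdivProofAux

/-- The subdivision of ℝ^d induced by m convex polyhedra with n facets
in total has O(m^⌈d/2⌉ n^⌊d/2⌋) vertices. -/
theorem subdivision_vertices_upper_bound (d : ℕ) (hd : 1 ≤ d) :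
    ∃ C : ℕ, 0 < C ∧
      ∀ (n m : ℕ), 1 ≤ m → m ≤ n →
        ∀ (H : Fin n → Set (Fin d → ℝ)) (color : Fin n → Fin m),
          (∀ i, IsClosedHalfspace (Fin d → ℝ) (H i)) →
          {p | IsSubdivVertex (fun j : Fin m => ⋂ i ∈ {i | color i = j}, H i) p}.Finite ∧
          {p | IsSubdivVertex (fun j : Fin m => ⋂ i ∈ {i | color i = j}, H i) p}.ncard
            ≤ C * m ^ ((d + 1) / 2) * n ^ (d / 2) := by
  classical
  refine ⟨2, by norm_num, ?_⟩
  intro n m hm hmn H color hH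
  choose F a hF0 hHeq using hH
  have hHfun : H = fun i => {x | F i x ≤ a i} := funext hHeq
  subst hHfun
  have hPeq : (fun j : Fin m => ⋂ i ∈ {i | color i = j},
      {x : Fin d → ℝ | F i x ≤ a i}) = SubdivProofAux.Pcol F a color := rfl
  rw [hPeq]
  set Vset := {p : Fin d → ℝ | IsSubdivVertex (SubdivProofAux.Pcol F a color) p}
    with hVset
  have hex : ∀ p ∈ Vset, ∃ c, SubdivProofAux.IsCert F a color p c :=
    fun p hp => SubdivProofAux.exists_cert hm hmn F a color p hp
  set f : (Fin d → ℝ) → Bool × (Fin ((d + 1) / 2) → Fin m) × (Fin (d / 2) → Fin n) :=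
    fun p => if hp : p ∈ Vset then Classical.choose (hex p hp) else
      (true, fun _ => ⟨0, hm⟩, fun _ => ⟨0, lt_of_lt_of_le hm hmn⟩) with hf
  have hfc : ∀ p ∈ Vset, SubdivProofAux.IsCert F a color p (f p) := by
    intro p hp
    have : f p = Classical.choose (hex p hp) := by rw [hf]; simp only [dif_pos hp]
    rw [this]
    exact Classical.choose_spec (hex p hp)
  have hinj : Set.InjOn f Vset := by
    intro p hp q hq hpq
    have h1 := hfc p hp
    have h2 := hfc q hq
    rw [← hpq] at h2
    exact SubdivProofAux.cert_unique h1 h2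
  have hfin : Vset.Finite := Set.Finite.of_finite_image (Set.toFinite _) hinj
  refine ⟨hfin, ?_⟩
  have hle : Vset.ncard ≤ (Set.univ :
      Set (Bool × (Fin ((d + 1) / 2) → Fin m) × (Fin (d / 2) → Fin n))).ncard :=
    Set.ncard_le_ncard_of_injOn f (fun p _ => Set.mem_univ _) hinj Set.finite_univ
  rw [Set.ncard_univ, Nat.card_eq_fintype_card, Fintype.card_prod, Fintype.card_prod,
    Fintype.card_bool, Fintype.card_fun, Fintype.card_fun, Fintype.card_fin,
    Fintype.card_fin, Fintype.card_fin, Fintype.card_fin] at hle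
  calc Vset.ncard ≤ 2 * (m ^ ((d + 1) / 2) * n ^ (d / 2)) := hle
    _ = 2 * m ^ ((d + 1) / 2) * n ^ (d / 2) := by ring
end

section
/- For every integer d ≥ 1 there exists a constant c > 0 such that for all integers m ≥ 1 and n ≥ 2dm there exist finitely many closed halfspaces in ℝ^d, at most n in total, each assigned one of m colors, such that, letting P_j be the intersection of the halfspaces of color j, the set of vertices of the subdivision induced by P_1, …, P_m has cardinality at least c · m^⌈d/2⌉ · n^⌊d/2⌋. -/
open Set

/-!
Split the coordinates into `⌊d/2⌋` planes and, for odd `d`, one extra axis. In every plane,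
colour `c` gets the halfplanes above the tangents to the parabola `y = x²` at the points
`t + c/m`, `t < K ≈ n/(dm)`, and on the extra axis the halfline `x ≤ -c`. Picking in each plane
two tangents such that no tangency point of a colour involved lies strictly between theirs, the
intersection point lies in the polyhedra of all these colours and is cut out by the chosen
tangents, so it is a vertex; different choices give different points. For `m ≥ 2d`, draw the two
colours of plane `b` from the disjoint windows `2b` and `2b+1` of `m/(2d)` colours each, with a
common `t`, and the colour of the extra axis above all windows: this gives
`((m/2d)² K)^⌊d/2⌋` vertices, times `m/2` for odd `d`. For `m < 2d` use one colour and two consecutive tangents in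
each plane, giving `m K^⌊d/2⌋` vertices. A vertex is determined by its sign vector with respect
to the halfspaces, so there are finitely many.
-/

open Filter Topology

section Faces

variable {V : Type*} [AddCommGroup V] [Module ℝ V]

lemma mem_minFace_self {P : Set V} {p : V} (hp : p ∈ P) : p ∈ minFace P p :=
  ⟨hp, by simp only [mem_iInter]; exact fun _ _ _ hfp _ => hfp⟩

lemma minFace_subset_setOf_eq {P : Set V} {p : V} {f : V →ₗ[ℝ] ℝ} {a : ℝ} (hf : f ≠ 0)
    (hfp : f p = a) (hP : P ⊆ {x | f x ≤ a}) : minFace P p ⊆ {x | f x = a} := fun _ hx => by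
  simp only [minFace, mem_inter_iff, mem_iInter] at hx
  exact hx.2 f a hf hfp hP

lemma isSubdivVertex_of_pinned {ι L : Type*} {P : ι → Set V} {p : V} (f : L → V →ₗ[ℝ] ℝ)
    (col : L → ι) (hf : ∀ l, f l ≠ 0) (hp : ∀ l, p ∈ P (col l))
    (hP : ∀ l, P (col l) ⊆ {x | f l x ≤ f l p}) (hpinned : ∀ x, (∀ l, f l x = f l p) → x = p) :
    IsSubdivVertex P p := by
  refine eq_singleton_iff_unique_mem.2 ⟨mem_iInter₂.2 fun j hj => mem_minFace_self hj, ?_⟩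
  intro x hx
  rw [mem_iInter₂] at hx
  exact hpinned x fun l => minFace_subset_setOf_eq (hf l) rfl (hP l) (hx (col l) (hp l))

lemma mem_minFace_of_tight_imp_tight {ι : Type*} [Finite ι] (f : ι → V →ₗ[ℝ] ℝ) (a : ι → ℝ)
    (T : Set ι) {p q : V} (hp : p ∈ ⋂ i ∈ T, {x | f i x ≤ a i})
    (hq : q ∈ ⋂ i ∈ T, {x | f i x ≤ a i}) (htight : ∀ i ∈ T, f i p = a i → f i q = a i) :
    q ∈ minFace (⋂ i ∈ T, {x | f i x ≤ a i}) p := by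
  simp only [mem_iInter, mem_ofPred_eq] at hp
  -- Moving from `p` slightly away from `q` keeps tight constraints tight and loose ones loose.
  have hnear : ∀ᶠ ε in 𝓝 (0 : ℝ), ∀ i ∈ T, f i (p + ε • (p - q)) ≤ a i := by
    refine eventually_all.2 fun i => ?_
    simp only [map_add, map_smul, map_sub, smul_eq_mul]
    by_cases hi : i ∈ T
    · rcases (hp i hi).lt_or_eq with hlt | heq
      · have hcont : Tendsto (fun ε : ℝ => f i p + ε * (f i p - f i q)) (𝓝 0) (𝓝 (f i p)) :=
          (by fun_prop : Continuous fun ε : ℝ => f i p + ε * (f i p - f i q)).tendsto' 0 _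
            (by simp)
        exact (hcont.eventually (eventually_le_nhds hlt)).mono fun _ h _ => h
      · exact Eventually.of_forall fun _ _ => by simp [heq, htight i hi heq]
    · exact Eventually.of_forall fun _ h => absurd h hi
  obtain ⟨ε, hε, hεpos⟩ := ((hnear.filter_mono nhdsWithin_le_nhds).and
    (self_mem_nhdsWithin : Ioi (0 : ℝ) ∈ 𝓝[>] 0)).exists
  refine ⟨hq, ?_⟩
  simp only [mem_iInter]
  intro g b _ hgp hP
  have hfar := hP (mem_iInter₂.2 hε)
  have hqb := hP hq
  simp only [mem_ofPred_eq, map_add, map_smul, map_sub, smul_eq_mul, hgp] at hfar hqb ⊢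
  nlinarith [hεpos]

lemma finite_setOf_isSubdivVertex {ι κ : Type*} [Finite ι] (f : ι → V →ₗ[ℝ] ℝ) (a : ι → ℝ)
    (col : ι → κ) :
    {p | IsSubdivVertex (fun j => ⋂ i ∈ {i | col i = j}, {x | f i x ≤ a i}) p}.Finite := by
  -- A vertex is determined by its sign vector with respect to the constraints.
  refine Finite.of_finite_image (f := fun p i => SignType.sign (f i p - a i)) (toFinite _) ?_
  intro p hp q _ hpq
  have hsign : ∀ i, SignType.sign (f i p - a i) = SignType.sign (f i q - a i) := congrFun hpq
  have hle : ∀ i, f i p ≤ a i → f i q ≤ a i := fun i => by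
    rw [← sub_nonpos, ← sign_nonpos_iff, hsign i, sign_nonpos_iff, sub_nonpos]
    exact id
  have heq : ∀ i, f i p = a i → f i q = a i := fun i => by
    rw [← sub_eq_zero, ← sign_eq_zero_iff, hsign i, sign_eq_zero_iff, sub_eq_zero]
    exact id
  have hq : q ∈ ⋂ j ∈ {j | p ∈ ⋂ i ∈ {i | col i = j}, {x | f i x ≤ a i}},
      minFace (⋂ i ∈ {i | col i = j}, {x | f i x ≤ a i}) p := by
    refine mem_iInter₂.2 fun j hj => mem_minFace_of_tight_imp_tight f a _ hj ?_ fun i _ => heq i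
    simp only [mem_ofPred_eq, mem_iInter] at hj ⊢
    exact fun i hi => hle i (hj i hi)
  have hp' : IsSubdivVertex _ p := hp
  exact (Eq.subset hp' hq).symm

end Faces

namespace TangentArrangement

section TangentPos

variable {m : ℕ}

/-- Tangent number `t` of colour `c` touches the parabola `y = x²` at `x = t + c / m`, so the
tangency points of all tangents are ordered lexicographically by `(t, c)`. -/
noncomputable def tangentPos (t : ℕ) (c : Fin m) : ℝ := t + c / m

lemma val_div_lt_one (c : Fin m) : (c : ℝ) / m < 1 := by
  have hm : (0 : ℝ) < m := by exact_mod_cast c.pos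
  rw [div_lt_one hm]
  exact_mod_cast c.isLt

lemma tangentPos_lt_tangentPos_of_lt {t t' : ℕ} (h : t < t') (c c' : Fin m) :
    tangentPos t c < tangentPos t' c' := by
  have ht : (t : ℝ) + 1 ≤ t' := by exact_mod_cast h
  have : (0 : ℝ) ≤ (c' : ℝ) / m := by positivity
  unfold tangentPos
  linarith [val_div_lt_one c]

lemma tangentPos_lt_tangentPos_iff {t t' : ℕ} {c c' : Fin m} :
    tangentPos t c < tangentPos t' c' ↔ t < t' ∨ t = t' ∧ c < c' := by
  rcases lt_trichotomy t t' with h | rfl | h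
  · exact iff_of_true (tangentPos_lt_tangentPos_of_lt h c c') (Or.inl h)
  · have hm : (0 : ℝ) < m := by exact_mod_cast c.pos
    simp [tangentPos, div_lt_div_iff_of_pos_right hm]
  · exact iff_of_false (tangentPos_lt_tangentPos_of_lt h c' c).not_gt (by omega)

lemma tangentPos_injective {K : ℕ} {p q : Fin K × Fin m}
    (h : tangentPos p.1 p.2 = tangentPos q.1 q.2) : p = q := by
  have h₁ := tangentPos_lt_tangentPos_iff.not.1 h.not_lt
  have h₂ := tangentPos_lt_tangentPos_iff.not.1 h.not_gt
  simp only [Fin.lt_def] at h₁ h₂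
  ext <;> omega

end TangentPos

lemma eq_of_tangents_eq {s₁ s₂ x y x' y' : ℝ} (hs : s₁ ≠ s₂)
    (h₁ : 2 * s₁ * x - y = 2 * s₁ * x' - y') (h₂ : 2 * s₂ * x - y = 2 * s₂ * x' - y') :
    x = x' ∧ y = y' := by
  have : (s₁ - s₂) * (x - x') = 0 := by linear_combination (h₁ - h₂) / 2
  have hx : x = x' := sub_eq_zero.1 ((mul_eq_zero.1 this).resolve_left (sub_ne_zero.2 hs))
  exact ⟨hx, by subst hx; linarith⟩

lemma eq_of_add_eq_of_mul_eq {s₁ s₂ s₁' s₂' : ℝ} (hs : s₁ < s₂) (hs' : s₁' < s₂')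
    (hadd : s₁ + s₂ = s₁' + s₂') (hmul : s₁ * s₂ = s₁' * s₂') : s₁ = s₁' ∧ s₂ = s₂' := by
  have : (s₁ - s₁') * (s₁ - s₂') = 0 := by linear_combination s₁ * hadd - hmul
  rcases mul_eq_zero.1 this with h | h
  · constructor <;> linarith
  · linarith

variable {κ β ο : Type*} {m K : ℕ} (σ : κ ≃ β × Fin 2 ⊕ ο)

/-- Coordinates come in pairs `(x, y)` indexed by blocks `b : β`, plus single coordinates `i : ο`,
through the identification `σ`. -/
def coord (a : β × Fin 2 ⊕ ο) : (κ → ℝ) →ₗ[ℝ] ℝ := LinearMap.proj (σ.symm a)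

@[simp] lemma coord_apply (a : β × Fin 2 ⊕ ο) (x : κ → ℝ) : coord σ a x = x (σ.symm a) := rfl

/-- In block `b`, tangent `t` of colour `c` bounds `{(x, y) | y ≥ 2 s x - s²}` for
`s = tangentPos t c`; the single coordinate `i` of colour `c` is bounded by `-c`. -/
noncomputable def functional : Fin m × (β × Fin K ⊕ ο) → (κ → ℝ) →ₗ[ℝ] ℝ
  | (c, .inl (b, t)) => (2 * tangentPos t c) • coord σ (.inl (b, 0)) - coord σ (.inl (b, 1))
  | (_, .inr i) => coord σ (.inr i)

noncomputable def bound : Fin m × (β × Fin K ⊕ ο) → ℝ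
  | (c, .inl (_, t)) => tangentPos t c ^ 2
  | (c, .inr _) => -c

lemma functional_ne_zero (i : Fin m × (β × Fin K ⊕ ο)) : functional σ i ≠ 0 := by
  classical
  intro h
  obtain ⟨c, ⟨b, t⟩ | j⟩ := i
  · have := LinearMap.congr_fun h (Pi.single (σ.symm (.inl (b, 1))) 1)
    simp [functional] at this
  · have := LinearMap.congr_fun h (Pi.single (σ.symm (.inr j)) 1)
    simp [functional] at this

def colourPolyhedron (m K : ℕ) (c : Fin m) : Set (κ → ℝ) :=
  ⋂ i ∈ {i : Fin m × (β × Fin K ⊕ ο) | i.1 = c}, {x | functional σ i x ≤ bound i}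

/-- A candidate vertex: in each block the two tangents `lo b`, `hi b` (as `(t, c)`) whose
intersection gives the block's coordinates, and the colours `top i` fixing the single
coordinates. -/
@[ext] structure VertexChoice (β ο : Type*) (m K : ℕ) where
  lo : β → Fin K × Fin m
  hi : β → Fin K × Fin m
  top : ο → Fin m

namespace VertexChoice

variable (τ : VertexChoice β ο m K)

noncomputable def loPos (b : β) : ℝ := tangentPos (τ.lo b).1 (τ.lo b).2

noncomputable def hiPos (b : β) : ℝ := tangentPos (τ.hi b).1 (τ.hi b).2

def colours : Set (Fin m) :=
  range (fun b => (τ.lo b).2) ∪ range (fun b => (τ.hi b).2) ∪ range τ.top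

/-- What makes `τ.point` lie in the polyhedra of all colours used by `τ`. -/
structure IsAdmissible : Prop where
  loPos_lt_hiPos : ∀ b, τ.loPos b < τ.hiPos b
  tangentPos_notMem_Ioo :
    ∀ b, ∀ c ∈ τ.colours, ∀ t : ℕ, tangentPos t c ∉ Ioo (τ.loPos b) (τ.hiPos b)
  le_top : ∀ i, ∀ c ∈ τ.colours, c ≤ τ.top i

/-- The tangents at `s₁ < s₂` to `y = x²` meet at `((s₁ + s₂) / 2, s₁ s₂)`. -/
noncomputable def coords : β × Fin 2 ⊕ ο → ℝ
  | .inl (b, j) => ![(τ.loPos b + τ.hiPos b) / 2, τ.loPos b * τ.hiPos b] j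
  | .inr i => -(τ.top i)

noncomputable def point : κ → ℝ := τ.coords ∘ σ

/-- The constraints tight at `τ.point σ` that pin it down. -/
def tightIdx : β × Fin 2 ⊕ ο → Fin m × (β × Fin K ⊕ ο)
  | .inl (b, j) => ((![τ.lo b, τ.hi b] j).2, .inl (b, (![τ.lo b, τ.hi b] j).1))
  | .inr i => (τ.top i, .inr i)

lemma functional_tightIdx_point (l : β × Fin 2 ⊕ ο) :
    functional σ (τ.tightIdx l) (τ.point σ) = bound (τ.tightIdx l) := by
  rcases l with ⟨b, j⟩ | i
  · fin_cases j <;> simp [tightIdx, functional, bound, point, coords, loPos, hiPos] <;> ring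
  · simp [tightIdx, functional, bound, point, coords]

lemma tightIdx_fst_mem_colours (l : β × Fin 2 ⊕ ο) : (τ.tightIdx l).1 ∈ τ.colours := by
  rcases l with ⟨b, j⟩ | i
  · fin_cases j <;> simp [tightIdx, colours]
  · simp [tightIdx, colours]

variable {τ}

lemma point_mem_colourPolyhedron (hτ : τ.IsAdmissible) {c : Fin m} (hc : c ∈ τ.colours) :
    τ.point σ ∈ colourPolyhedron σ m K c := by
  simp only [colourPolyhedron, mem_iInter, mem_ofPred_eq]
  rintro ⟨c', ⟨b, t⟩ | i⟩ rfl
  · have hlt := hτ.loPos_lt_hiPos b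
    have hout := hτ.tangentPos_notMem_Ioo b c' hc t
    rw [mem_Ioo, not_and_or, not_lt, not_lt] at hout
    simp only [functional, bound, point, coords, LinearMap.sub_apply, LinearMap.smul_apply,
      coord_apply, Function.comp_apply, Equiv.apply_symm_apply, smul_eq_mul,
      Matrix.cons_val_zero, Matrix.cons_val_one]
    -- `s² - (2 s x - y) = (s - s₁)(s - s₂)` at the intersection point.
    rcases hout with h | h <;> nlinarith
  · simp only [functional, bound, point, coords, coord_apply, Function.comp_apply,
      Equiv.apply_symm_apply, neg_le_neg_iff]
    exact_mod_cast hτ.le_top i c' hc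

lemma isSubdivVertex_point (hτ : τ.IsAdmissible) :
    IsSubdivVertex (colourPolyhedron σ m K) (τ.point σ) := by
  refine isSubdivVertex_of_pinned (fun l => functional σ (τ.tightIdx l))
    (fun l => (τ.tightIdx l).1) (fun l => functional_ne_zero σ _)
    (fun l => point_mem_colourPolyhedron σ hτ (τ.tightIdx_fst_mem_colours l))
    (fun l x hx => ?_) ?_
  · rw [mem_ofPred_eq, functional_tightIdx_point]
    exact mem_iInter₂.1 hx (τ.tightIdx l) rfl
  · intro x hx
    funext k
    obtain ⟨a, rfl⟩ := σ.symm.surjective k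
    rcases a with ⟨b, j⟩ | i
    · have h₀ := hx (.inl (b, 0))
      have h₁ := hx (.inl (b, 1))
      simp only [tightIdx, functional, point, coords, LinearMap.sub_apply, LinearMap.smul_apply,
        coord_apply, Function.comp_apply, Equiv.apply_symm_apply, smul_eq_mul,
        Matrix.cons_val_zero, Matrix.cons_val_one] at h₀ h₁
      have h := eq_of_tangents_eq (hτ.loPos_lt_hiPos b).ne h₀ h₁
      fin_cases j <;> simp [point, coords, h.1, h.2]
    · simpa [tightIdx, functional, point] using hx (.inr i)

lemma point_injOn : {τ : VertexChoice β ο m K | τ.IsAdmissible}.InjOn (point σ) := by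
  intro τ hτ τ' hτ' h
  have hc : ∀ a, τ.coords a = τ'.coords a := fun a => by
    simpa [point] using congrFun h (σ.symm a)
  have hpos : ∀ b, τ.loPos b = τ'.loPos b ∧ τ.hiPos b = τ'.hiPos b := fun b => by
    have h₀ := hc (.inl (b, 0))
    have h₁ := hc (.inl (b, 1))
    simp only [coords, Matrix.cons_val_zero, Matrix.cons_val_one] at h₀ h₁
    exact eq_of_add_eq_of_mul_eq (hτ.loPos_lt_hiPos b) (hτ'.loPos_lt_hiPos b) (by linarith) h₁
  ext1
  · exact funext fun b => tangentPos_injective (hpos b).1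
  · exact funext fun b => tangentPos_injective (hpos b).2
  · funext i
    have := hc (.inr i)
    simp only [coords, neg_inj, Nat.cast_inj] at this
    exact Fin.ext this

lemma card_le_ncard_of_injective [Finite β] [Finite ο] {α : Type*}
    (φ : α → VertexChoice β ο m K) (hφ : Function.Injective φ) (hadm : ∀ a, (φ a).IsAdmissible) :
    Nat.card α ≤ {p | IsSubdivVertex (colourPolyhedron σ m K) p}.ncard := by
  have hfin : {p | IsSubdivVertex (colourPolyhedron σ m K) p}.Finite :=
    finite_setOf_isSubdivVertex (functional σ) bound
      (Prod.fst : Fin m × (β × Fin K ⊕ ο) → Fin m)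
  have := hfin.to_subtype
  exact Nat.card_le_card_of_injective (fun a => ⟨(φ a).point σ, isSubdivVertex_point σ (hadm a)⟩)
    fun a a' h => hφ (point_injOn σ (hadm a) (hadm a') (congrArg Subtype.val h))

end VertexChoice

def monochromatic (c : Fin m) (t : β → Fin K) : VertexChoice β ο m (K + 1) where
  lo b := ((t b).castSucc, c)
  hi b := ((t b).succ, c)
  top _ := c

lemma monochromatic_isAdmissible (c : Fin m) (t : β → Fin K) :
    (monochromatic (ο := ο) c t).IsAdmissible := by
  have hcol : ∀ c' ∈ (monochromatic (ο := ο) c t).colours, c' = c := by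
    simp only [VertexChoice.colours, monochromatic, mem_union, mem_range]
    rintro c' ((⟨_, rfl⟩ | ⟨_, rfl⟩) | ⟨_, rfl⟩) <;> rfl
  refine ⟨fun b => tangentPos_lt_tangentPos_of_lt (by simp [monochromatic]) _ _,
    fun b c' hc' u hu => ?_, fun i c' hc' => (hcol c' hc').le⟩
  obtain rfl := hcol c' hc'
  simp only [VertexChoice.loPos, VertexChoice.hiPos, monochromatic, mem_Ioo,
    tangentPos_lt_tangentPos_iff, lt_irrefl, and_false, or_false, Fin.val_castSucc,
    Fin.val_succ] at hu
  omega

lemma monochromatic_injective (hne : Nonempty (β ⊕ ο)) :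
    Function.Injective fun x : Fin m × (β → Fin K) => monochromatic (ο := ο) x.1 x.2 := by
  rintro ⟨c, t⟩ ⟨c', t'⟩ h
  have hlo := congrArg VertexChoice.lo h
  have htop := congrArg VertexChoice.top h
  simp only [monochromatic, funext_iff, Prod.mk.injEq] at hlo htop
  obtain rfl : c = c' := by
    obtain ⟨b | i⟩ := hne
    · exact (hlo b).2
    · exact htop i
  exact Prod.ext rfl (funext fun b => Fin.castSucc_injective _ (hlo b).1)

lemma le_of_mul_add_lt_mul_add {a a' r r' W : ℕ} (hr' : r' < W) (h : a * W + r < a' * W + r') :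
    a ≤ a' := by
  by_contra! ha
  nlinarith [Nat.mul_le_mul_right W (Nat.succ_le_of_lt ha)]

section Windowed

variable {B : ℕ}

lemma two_mul_add_one_mul_add_lt {W : ℕ} (b : Fin B) {r : ℕ} (hr : r < W) :
    (2 * b + 1) * W + r < 2 * B * W := by
  nlinarith [b.isLt]

def windowed (W : ℕ) (hW : 2 * B * W ≤ m) (g : Fin B → Fin W × Fin W × Fin K)
    (z : ο → Fin (m - 2 * B * W)) : VertexChoice (Fin B) ο m (K + 1) where
  lo b := ((g b).2.2.castSucc, ⟨2 * b * W + (g b).1, by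
    have := two_mul_add_one_mul_add_lt b (g b).1.isLt; nlinarith⟩)
  hi b := ((g b).2.2.castSucc, ⟨(2 * b + 1) * W + (g b).2.1, by
    have := two_mul_add_one_mul_add_lt b (g b).2.1.isLt; omega⟩)
  top i := ⟨2 * B * W + z i, by have := (z i).isLt; omega⟩

lemma windowed_isAdmissible [Subsingleton ο] (W : ℕ) (hW : 2 * B * W ≤ m)
    (g : Fin B → Fin W × Fin W × Fin K) (z : ο → Fin (m - 2 * B * W)) :
    (windowed W hW g z).IsAdmissible := by
  refine ⟨fun b => ?_, fun b c hc u hu => ?_, fun i c hc => ?_⟩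
  · refine tangentPos_lt_tangentPos_iff.2 (Or.inr ⟨rfl, ?_⟩)
    simp only [windowed, Fin.lt_def]
    nlinarith [(g b).1.isLt]
  · simp only [VertexChoice.loPos, VertexChoice.hiPos, windowed, mem_Ioo,
      tangentPos_lt_tangentPos_iff, Fin.lt_def, Fin.val_castSucc] at hu
    -- a tangency point in the gap has the same `t` and a colour strictly between the two
    obtain ⟨hlt | ⟨hut, hlo⟩, hgt | ⟨htu, hhi⟩⟩ := hu
    all_goals try omega
    have hk := (g b).2.1.isLt
    simp only [VertexChoice.colours, windowed, mem_union, mem_range] at hc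
    obtain (⟨b', rfl⟩ | ⟨b', rfl⟩) | ⟨i, rfl⟩ := hc
    · have h₁ := le_of_mul_add_lt_mul_add (g b').1.isLt hlo
      have h₂ := le_of_mul_add_lt_mul_add hk hhi
      obtain rfl : b' = b := Fin.ext (by omega)
      exact lt_irrefl _ hlo
    · have h₁ := le_of_mul_add_lt_mul_add (g b').2.1.isLt hlo
      have h₂ := le_of_mul_add_lt_mul_add hk hhi
      obtain rfl : b' = b := Fin.ext (by omega)
      exact lt_irrefl _ hhi
    · have := le_of_mul_add_lt_mul_add hk hhi
      omega
  · simp only [VertexChoice.colours, windowed, mem_union, mem_range] at hc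
    obtain (⟨b, rfl⟩ | ⟨b, rfl⟩) | ⟨i', rfl⟩ := hc
    · simp only [windowed, Fin.le_def]
      nlinarith [two_mul_add_one_mul_add_lt b (g b).1.isLt]
    · simp only [windowed, Fin.le_def]
      nlinarith [two_mul_add_one_mul_add_lt b (g b).2.1.isLt]
    · rw [Subsingleton.elim i' i]
      exact le_rfl

lemma windowed_injective (W : ℕ) (hW : 2 * B * W ≤ m) :
    Function.Injective fun x : (Fin B → Fin W × Fin W × Fin K) × (ο → Fin (m - 2 * B * W)) =>
      windowed W hW x.1 x.2 := by
  rintro ⟨g, z⟩ ⟨g', z'⟩ h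
  have hlo := congrArg VertexChoice.lo h
  have hhi := congrArg VertexChoice.hi h
  have htop := congrArg VertexChoice.top h
  simp only [windowed, funext_iff, Prod.mk.injEq, Fin.mk.injEq, Fin.castSucc_inj,
    add_right_inj] at hlo hhi htop
  exact Prod.ext (funext fun b => Prod.ext (Fin.ext (hlo b).2)
    (Prod.ext (Fin.ext (hhi b).2) (hlo b).1)) (funext fun i => Fin.ext (htop i))

end Windowed

lemma pow_mul_pow_le_of_le_two_mul {d m n K : ℕ} (hd : 1 ≤ d) (hmd : m ≤ 2 * d)
    (hn : n ≤ 4 * d * m * K) :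
    m ^ ((d + 1) / 2) * n ^ (d / 2) ≤ (64 * d ^ 3) ^ d * (m * K ^ (d / 2)) := by
  have hm : m ^ d ≤ m * (2 * d) ^ d := by
    obtain ⟨e, rfl⟩ : ∃ e, d = e + 1 := ⟨d - 1, by omega⟩
    rw [pow_succ', pow_succ]
    gcongr
    exact le_mul_of_le_of_one_le (Nat.pow_le_pow_left hmd e) (by omega)
  calc m ^ ((d + 1) / 2) * n ^ (d / 2) ≤ m ^ ((d + 1) / 2) * (4 * d * m * K) ^ (d / 2) := by
        gcongr
    _ = (4 * d) ^ (d / 2) * m ^ ((d + 1) / 2 + d / 2) * K ^ (d / 2) := by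
        rw [mul_pow, mul_pow, pow_add]; ring
    _ = (4 * d) ^ (d / 2) * m ^ d * K ^ (d / 2) := by rw [show (d + 1) / 2 + d / 2 = d by omega]
    _ ≤ (4 * d) ^ d * (m * (2 * d) ^ d) * K ^ (d / 2) := by
        gcongr
        exacts [by omega, by omega]
    _ = (4 * d * (2 * d)) ^ d * (m * K ^ (d / 2)) := by rw [mul_pow (4 * d) (2 * d)]; ring
    _ ≤ (64 * d ^ 3) ^ d * (m * K ^ (d / 2)) :=
        Nat.mul_le_mul_right _
          (Nat.pow_le_pow_left (by nlinarith [Nat.mul_le_mul_left (d * d) hd]) _)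

lemma pow_mul_pow_le_of_le_mul {d m n K W z : ℕ} (hd : 1 ≤ d) (hmW : m ≤ 4 * d * W)
    (hn : n ≤ 4 * d * m * K) (hmz : m ≤ 2 * z) :
    m ^ ((d + 1) / 2) * n ^ (d / 2) ≤
      (64 * d ^ 3) ^ d * ((W * (W * K)) ^ (d / 2) * z ^ (d % 2)) := by
  have hd3 : 1 ≤ d ^ 3 := Nat.one_le_pow _ _ hd
  have hmn : m * n ≤ 64 * d ^ 3 * (W * (W * K)) :=
    calc m * n ≤ m * (4 * d * m * K) := by gcongr
      _ = 4 * d * K * (m * m) := by ring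
      _ ≤ 4 * d * K * ((4 * d * W) * (4 * d * W)) := by gcongr
      _ = 64 * d ^ 3 * (W * (W * K)) := by ring
  calc m ^ ((d + 1) / 2) * n ^ (d / 2) = (m * n) ^ (d / 2) * m ^ (d % 2) := by
        rw [mul_pow, show (d + 1) / 2 = d / 2 + d % 2 by omega, pow_add]; ring
    _ ≤ (64 * d ^ 3 * (W * (W * K))) ^ (d / 2) * (64 * d ^ 3 * z) ^ (d % 2) := by
        gcongr
        nlinarith
    _ = (64 * d ^ 3) ^ (d / 2 + d % 2) * ((W * (W * K)) ^ (d / 2) * z ^ (d % 2)) := by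
        rw [mul_pow, mul_pow, pow_add]; ring
    _ ≤ (64 * d ^ 3) ^ d * ((W * (W * K)) ^ (d / 2) * z ^ (d % 2)) := by
        gcongr
        exacts [by omega, by omega]

lemma le_four_mul_mul_div_sub_one {d m n : ℕ} (hdm : 0 < d * m) (hn : 2 * d * m ≤ n) :
    n ≤ 4 * d * m * (n / (d * m) - 1) := by
  have hq : 2 ≤ n / (d * m) := (Nat.le_div_iff_mul_le hdm).2 (by linarith)
  calc n ≤ d * m * (n / (d * m) + 1) := (Nat.lt_mul_div_succ n hdm).le
    _ ≤ d * m * (4 * (n / (d * m) - 1)) := by gcongr; omega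
    _ = 4 * d * m * (n / (d * m) - 1) := by ring

lemma pow_mul_pow_le_mul_ncard {κ : Type*} {d m n : ℕ} (σ : κ ≃ Fin (d / 2) × Fin 2 ⊕ Fin (d % 2))
    (hd : 1 ≤ d) (hm : 1 ≤ m) (hn : 2 * d * m ≤ n) :
    m ^ ((d + 1) / 2) * n ^ (d / 2) ≤
      (64 * d ^ 3) ^ d *
        {p | IsSubdivVertex (colourPolyhedron σ m (n / (d * m) - 1 + 1)) p}.ncard := by
  set K := n / (d * m) - 1
  have hnK : n ≤ 4 * d * m * K := le_four_mul_mul_div_sub_one (by positivity) hn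
  rcases lt_or_ge m (2 * d) with hsmall | hlarge
  · have hne : Nonempty (Fin (d / 2) ⊕ Fin (d % 2)) :=
      ⟨if h : 0 < d / 2 then .inl ⟨0, h⟩ else .inr ⟨0, by omega⟩⟩
    have hcard := VertexChoice.card_le_ncard_of_injective σ _
      (monochromatic_injective (m := m) (K := K) hne) fun x => monochromatic_isAdmissible x.1 x.2
    simp only [Nat.card_eq_fintype_card, Fintype.card_prod, Fintype.card_fin,
      Fintype.card_fun] at hcard
    exact (pow_mul_pow_le_of_le_two_mul hd hsmall.le hnK).trans (Nat.mul_le_mul_left _ hcard)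
  · have : Subsingleton (Fin (d % 2)) := Fin.subsingleton_iff_le_one.2 (by omega)
    set W := m / (2 * d)
    have hmW : m ≤ 4 * d * W := by
      have h₁ : m < 2 * d * (W + 1) := Nat.lt_mul_div_succ m (by omega)
      have h₂ : 2 * d ≤ 2 * d * W :=
        Nat.le_mul_of_pos_right _ ((Nat.le_div_iff_mul_le (by omega)).2 (by omega))
      nlinarith
    have hdW : 2 * d * W ≤ m := Nat.mul_div_le m (2 * d)
    have hBW : 2 * (d / 2) * W ≤ d * W := Nat.mul_le_mul_right _ (by omega)
    have hW₂ : 2 * (2 * (d / 2) * W) ≤ m := by linarith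
    have hW : 2 * (d / 2) * W ≤ m := by omega
    have hcard := VertexChoice.card_le_ncard_of_injective σ _
      (windowed_injective (K := K) W hW) fun x => windowed_isAdmissible W hW x.1 x.2
    simp only [Nat.card_eq_fintype_card, Fintype.card_prod, Fintype.card_fin,
      Fintype.card_fun] at hcard
    exact (pow_mul_pow_le_of_le_mul hd hmW hnK (by omega)).trans
      (Nat.mul_le_mul_left _ hcard)

end TangentArrangement

open TangentArrangement

lemma biInter_fiber_comp_equiv {α ι κ X : Type*} (e : α ≃ ι) (col : ι → κ) (H : ι → Set X)
    (j : κ) : ⋂ a ∈ {a | col (e a) = j}, H (e a) = ⋂ i ∈ {i | col i = j}, H i := by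
  ext x
  simp only [mem_iInter, mem_ofPred_eq]
  rw [e.forall_congr_left]
  simp

lemma card_le_of_two_mul_mul_le {d m n : ℕ} (hd : 1 ≤ d) (hm : 1 ≤ m) (hn : 2 * d * m ≤ n) :
    m * (d / 2 * (n / (d * m) - 1 + 1) + d % 2) ≤ n := by
  have hdm : 0 < d * m := by positivity
  rw [Nat.sub_add_cancel ((Nat.le_div_iff_mul_le hdm).2 (by linarith))]
  have h₁ : n / (d * m) * (d * m) ≤ n := Nat.div_mul_le_self n (d * m)
  have h₂ : 2 * (d / 2) * (n / (d * m) * m) ≤ d * (n / (d * m) * m) :=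
    Nat.mul_le_mul_right _ (Nat.mul_div_le d 2)
  have h₃ : d % 2 * m ≤ 1 * m := Nat.mul_le_mul_right m (by omega)
  have h₄ : 1 * m ≤ d * m := Nat.mul_le_mul_right m hd
  nlinarith

/-- The lower bound: for n ≥ 2dm there are at most n colored halfspaces
(m colors) whose induced subdivision has Ω(m^⌈d/2⌉ n^⌊d/2⌋) vertices. -/
theorem subdivision_vertices_lower_bound (d : ℕ) (hd : 1 ≤ d) :
    ∃ c : ℝ, 0 < c ∧
      ∀ (n m : ℕ), 1 ≤ m → 2 * d * m ≤ n →
        ∃ (N : ℕ), N ≤ n ∧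
          ∃ (H : Fin N → Set (Fin d → ℝ)) (color : Fin N → Fin m),
            (∀ i, IsClosedHalfspace (Fin d → ℝ) (H i)) ∧
            c * (m : ℝ) ^ ((d + 1) / 2) * (n : ℝ) ^ (d / 2)
              ≤ ({p | IsSubdivVertex (fun j : Fin m => ⋂ i ∈ {i | color i = j}, H i) p}.ncard : ℝ) := by
  refine ⟨1 / (64 * d ^ 3 : ℝ) ^ d, by positivity, fun n m hm hn => ?_⟩
  let σ : Fin d ≃ Fin (d / 2) × Fin 2 ⊕ Fin (d % 2) := Fintype.equivOfCardEq (by simp; omega)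
  let e := (Fintype.equivFin (Fin m × (Fin (d / 2) × Fin (n / (d * m) - 1 + 1) ⊕ Fin (d % 2)))).symm
  refine ⟨_, by simpa using card_le_of_two_mul_mul_le hd hm hn,
    fun i => {x | functional σ (e i) x ≤ bound (e i)}, fun i => (e i).1,
    fun i => ⟨_, _, functional_ne_zero σ (e i), rfl⟩, ?_⟩
  simp_rw [biInter_fiber_comp_equiv e Prod.fst (fun i => {x | functional σ i x ≤ bound i})]
  rw [mul_assoc, one_div, inv_mul_le_iff₀ (by positivity)]
  exact_mod_cast pow_mul_pow_le_mul_ncard σ hd hm hn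
end

section
/- For every integer d ≥ 1 there exists a constant C > 0 such that for every integer n ≥ 1 and every convex polyhedron P ⊆ ℝ^d that is the intersection of n closed halfspaces, the set of extreme points of P is finite and has cardinality at most C · n^⌊d/2⌋. -/
open Set Module

namespace UpperBoundAux

variable {W : Type*} [AddCommGroup W] [Module ℝ W] [FiniteDimensional ℝ W]

/-- A finite set of nonzero vectors admits a functional nonvanishing on all of them. -/
lemma exists_dual_ne_zero_on_finite {Z : Set W} (hZ : Z.Finite) (h0 : ∀ z ∈ Z, z ≠ 0) :
    ∃ c : W →ₗ[ℝ] ℝ, ∀ z ∈ Z, c z ≠ 0 := by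
  classical
  revert h0
  refine Set.Finite.induction_on
    (motive := fun Y _ => (∀ z ∈ Y, z ≠ 0) → ∃ c : W →ₗ[ℝ] ℝ, ∀ z ∈ Y, c z ≠ 0) Z hZ ?_ ?_
  · exact fun _ => ⟨0, by simp⟩
  · intro z Z hzZ hZfin ih h0
    obtain ⟨c, hc⟩ := ih (fun w hw => h0 w (Set.mem_insert_of_mem _ hw))
    have hz : z ≠ 0 := h0 z (Set.mem_insert _ _)
    have : ¬ ∀ φ : W →ₗ[ℝ] ℝ, φ z = 0 := by
      rw [show (∀ φ : W →ₗ[ℝ] ℝ, φ z = 0) ↔ z = 0 from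
        Module.forall_dual_apply_eq_zero_iff ℝ z]
      exact hz
    push_neg at this
    obtain ⟨c₀, hc₀⟩ := this
    set S : Set ℝ := (fun w => -(c w) / (c₀ w)) '' (insert z Z) with hS
    have hSfin : S.Finite := ((hZfin.insert z).image _)
    obtain ⟨t, ht⟩ := hSfin.infinite_compl.nonempty
    refine ⟨c + t • c₀, ?_⟩
    intro w hw hcontra
    simp only [LinearMap.add_apply, LinearMap.smul_apply, smul_eq_mul] at hcontra
    by_cases h : c₀ w = 0
    · rcases Set.mem_insert_iff.1 hw with rfl | hwZ
      · exact hc₀ h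
      · exact hc w hwZ (by rw [h, mul_zero, add_zero] at hcontra; exact hcontra)
    · apply ht
      refine ⟨w, hw, ?_⟩
      field_simp
      linarith

/-- From a separating family `s` of functionals, extract a finite subfamily `b` of size
`≤ finrank` together with "dual vectors" `e`. -/
lemma exists_dual_subbasis (s : Set (W →ₗ[ℝ] ℝ))
    (hs : ∀ y : W, (∀ f ∈ s, f y = 0) → y = 0) :
    ∃ b : Finset (W →ₗ[ℝ] ℝ), ↑b ⊆ s ∧ b.card ≤ finrank ℝ W ∧
      ∃ e : (W →ₗ[ℝ] ℝ) → W,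
        (∀ f ∈ b, f (e f) = -1) ∧
        (∀ f ∈ b, ∀ g ∈ b, f ≠ g → f (e g) = 0) ∧
        (∀ y : W, y = ∑ f ∈ b, (-(f y)) • e f) := by
  classical
  have hspan : Submodule.span ℝ s = ⊤ :=
    Submodule.span_eq_top_of_ne_zero (fun z hz => by
      by_contra hc; push_neg at hc; exact hz (hs z hc))
  obtain ⟨b0, hb0s, hb0span, hb0li⟩ := exists_linearIndependent ℝ s
  have hb0fin : b0.Finite := hb0li.setFinite
  have hb0span' : Submodule.span ℝ b0 = ⊤ := by rw [hb0span, hspan]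
  haveI : Fintype b0 := hb0fin.fintype
  let β : Basis b0 ℝ (W →ₗ[ℝ] ℝ) := Basis.mk hb0li
    (by rw [Subtype.range_coe]; exact le_of_eq hb0span'.symm)
  have hβ : ∀ g : b0, β g = (g : W →ₗ[ℝ] ℝ) := fun g => Basis.mk_apply _ _ _
  have hcard : hb0fin.toFinset.card ≤ finrank ℝ W := by
    rw [Set.Finite.card_toFinset]
    rw [← Subspace.dual_finrank_eq (K := ℝ) (V := W)]
    exact le_of_eq (Module.finrank_eq_card_basis β).symm
  set e : (W →ₗ[ℝ] ℝ) → W := fun g =>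
    if h : g ∈ b0 then -((Module.evalEquiv ℝ W).symm (β.dualBasis ⟨g, h⟩)) else 0 with he
  have hdual : ∀ f (hf : f ∈ b0) (g : _) (hg : g ∈ b0),
      f (e g) = -(if (⟨f, hf⟩ : b0) = ⟨g, hg⟩ then (1:ℝ) else 0) := by
    intro f hf g hg
    rw [he]
    simp only [dif_pos hg, map_neg, neg_inj]
    conv_lhs => rw [show f = β ⟨f, hf⟩ from (hβ ⟨f, hf⟩).symm]
    erw [Module.apply_evalEquiv_symm_apply]
    rw [Basis.dualBasis_apply_self]
  have hd1 : ∀ f ∈ hb0fin.toFinset, f (e f) = -1 := by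
    intro f hf
    rw [Set.Finite.mem_toFinset] at hf
    rw [hdual f hf f hf, if_pos rfl]
  have hd0 : ∀ f ∈ hb0fin.toFinset, ∀ g ∈ hb0fin.toFinset, f ≠ g → f (e g) = 0 := by
    intro f hf g hg hfg
    rw [Set.Finite.mem_toFinset] at hf hg
    rw [hdual f hf g hg, if_neg (fun hc => hfg (by simpa using congrArg Subtype.val hc)),
      neg_zero]
  refine ⟨hb0fin.toFinset, by rw [Set.Finite.coe_toFinset]; exact hb0s, hcard, e, hd1, hd0, ?_⟩
  intro y
  have key : ∀ g ∈ b0, g (y - ∑ f ∈ hb0fin.toFinset, (-(f y)) • e f) = 0 := by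
    intro g hg
    have hgm : g ∈ hb0fin.toFinset := by rwa [Set.Finite.mem_toFinset]
    rw [map_sub, map_sum]
    rw [Finset.sum_eq_single_of_mem g hgm
      (fun f hf hfg => by rw [map_smul, hd0 g hgm f hf (Ne.symm hfg), smul_zero])]
    rw [map_smul, hd1 g hgm, smul_eq_mul]
    ring
  have hall : ∀ φ : W →ₗ[ℝ] ℝ, φ (y - ∑ f ∈ hb0fin.toFinset, (-(f y)) • e f) = 0 := by
    intro φ
    have hφ : φ ∈ Submodule.span ℝ b0 := by rw [hb0span']; trivial
    induction hφ using Submodule.span_induction with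
    | mem g hg => exact key g hg
    | zero => simp
    | add f g _ _ hf hg => rw [LinearMap.add_apply, hf, hg, add_zero]
    | smul t f _ hf => rw [LinearMap.smul_apply, hf, smul_zero]
  exact sub_eq_zero.1 ((Module.forall_dual_apply_eq_zero_iff ℝ _).1 hall)

end UpperBoundAux

/-- Asymptotic Upper Bound Theorem: a polyhedron in ℝ^d defined by n
closed halfspaces has O(n^⌊d/2⌋) extreme points. -/
theorem polyhedron_extremePoints_upper_bound (d : ℕ) (hd : 1 ≤ d) :
    ∃ C : ℕ, 0 < C ∧
      ∀ (n : ℕ), 1 ≤ n →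
        ∀ (H : Fin n → Set (Fin d → ℝ)),
          (∀ i, IsClosedHalfspace (Fin d → ℝ) (H i)) →
          (Set.extremePoints ℝ (⋂ i, H i)).Finite ∧
          (Set.extremePoints ℝ (⋂ i, H i)).ncard ≤ C * n ^ (d / 2) := by
  have exists_dual_ne_zero_on_finite : ∀ {Z : Set (Fin d → ℝ)}, Z.Finite →
      (∀ z ∈ Z, z ≠ 0) → ∃ c : (Fin d → ℝ) →ₗ[ℝ] ℝ, ∀ z ∈ Z, c z ≠ 0 :=
    fun hZ h0 => UpperBoundAux.exists_dual_ne_zero_on_finite hZ h0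
  have exists_dual_subbasis := fun s hs =>
    UpperBoundAux.exists_dual_subbasis (W := Fin d → ℝ) s hs
  simp only [IsClosedHalfspace]
  classical
  refine ⟨2 * (d / 2 + 1), by positivity, ?_⟩
  intro n hn H hH
  choose f a hf0 hHeq using hH
  set P := ⋂ i, H i with hP
  have hmem : ∀ x, x ∈ P ↔ ∀ i, f i x ≤ a i := by
    intro x
    rw [hP, Set.mem_iInter]
    exact forall_congr' fun i => by rw [hHeq i]; rfl
  set V := Set.extremePoints ℝ P with hV
  -- Step A: tight constraints at an extreme point separate points
  have stepA : ∀ p ∈ V, ∀ y : Fin d → ℝ, (∀ i, f i p = a i → f i y = 0) → y = 0 := by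
    intro p hp y hy
    by_contra hy0
    obtain ⟨hpP, hext⟩ := hp
    have hlt : ∀ i, f i y ≠ 0 → f i p < a i := fun i hi =>
      lt_of_le_of_ne ((hmem p).1 hpP i) (fun h => hi (hy i h))
    set S : Finset ℝ := insert 1 ((Finset.univ.filter (fun i => f i y ≠ 0)).image
      (fun i => (a i - f i p) / |f i y|)) with hS
    have hSne : S.Nonempty := ⟨1, Finset.mem_insert_self _ _⟩
    set ε := S.min' hSne with hε
    have hεpos : 0 < ε := by
      rw [hε, Finset.lt_min'_iff]
      intro x hx
      rcases Finset.mem_insert.1 hx with h1 | h2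
      · rw [h1]; norm_num
      · obtain ⟨i, hi, rfl⟩ := Finset.mem_image.1 h2
        have hiy : f i y ≠ 0 := (Finset.mem_filter.1 hi).2
        exact div_pos (sub_pos.2 (hlt i hiy)) (abs_pos.2 hiy)
    have hkey : ∀ s : ℝ, |s| ≤ ε → p + s • y ∈ P := by
      intro s hs
      rw [hmem]
      intro i
      have hfi : f i (p + s • y) = f i p + s * f i y := by
        rw [map_add, map_smul, smul_eq_mul]
      by_cases h : f i y = 0
      · rw [hfi, h, mul_zero, add_zero]; exact (hmem p).1 hpP i
      · have hle : ε ≤ (a i - f i p) / |f i y| := by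
          refine Finset.min'_le _ _ (Finset.mem_insert_of_mem (Finset.mem_image_of_mem _ ?_))
          exact Finset.mem_filter.2 ⟨Finset.mem_univ i, h⟩
        have h1 : s * f i y ≤ |s| * |f i y| := by
          rw [← abs_mul]; exact le_abs_self _
        have h2 : |s| * |f i y| ≤ ((a i - f i p) / |f i y|) * |f i y| :=
          mul_le_mul_of_nonneg_right (hs.trans hle) (abs_nonneg _)
        have h3 : ((a i - f i p) / |f i y|) * |f i y| = a i - f i p := by
          field_simp
        rw [hfi]; linarith
    have h1 : p + ε • y ∈ P := hkey ε (by rw [abs_of_pos hεpos])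
    have h2 : p - ε • y ∈ P := by
      have := hkey (-ε) (by rw [abs_neg, abs_of_pos hεpos])
      rwa [neg_smul, ← sub_eq_add_neg] at this
    have hseg : p ∈ openSegment ℝ (p - ε • y) (p + ε • y) := by
      refine ⟨1/2, 1/2, by norm_num, by norm_num, by norm_num, ?_⟩
      module
    have hcontra := (hext h2 h1 hseg)
    rw [sub_eq_self] at hcontra
    rcases smul_eq_zero.1 hcontra with h | h
    · exact absurd h (ne_of_gt hεpos)
    · exact hy0 h
  -- Step B: choose a dual subbasis at each extreme point
  have stepB : ∀ p : Fin d → ℝ, ∃ (b : Finset ((Fin d → ℝ) →ₗ[ℝ] ℝ))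
      (e : ((Fin d → ℝ) →ₗ[ℝ] ℝ) → (Fin d → ℝ))
      (ind : ((Fin d → ℝ) →ₗ[ℝ] ℝ) → Fin n), p ∈ V →
      (b.card ≤ d ∧
       (∀ g ∈ b, f (ind g) = g ∧ f (ind g) p = a (ind g)) ∧
       (∀ g ∈ b, g (e g) = -1) ∧
       (∀ g ∈ b, ∀ g' ∈ b, g ≠ g' → g (e g') = 0) ∧
       (∀ y : Fin d → ℝ, y = ∑ g ∈ b, (-(g y)) • e g)) := by
    intro p
    by_cases hp : p ∈ V
    · have hs : ∀ y : Fin d → ℝ, (∀ g ∈ f '' {i | f i p = a i}, g y = 0) → y = 0 := by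
        intro y h
        exact stepA p hp y (fun i hi => h (f i) ⟨i, hi, rfl⟩)
      obtain ⟨bb, hsub, hcard, e, hd1, hd0, hident⟩ := exists_dual_subbasis _ hs
      have hindex : ∀ g : (Fin d → ℝ) →ₗ[ℝ] ℝ, ∃ i : Fin n,
          g ∈ bb → (f i = g ∧ f i p = a i) := by
        intro g
        by_cases hg : g ∈ bb
        · obtain ⟨i, hi, hfi⟩ := hsub hg
          exact ⟨i, fun _ => ⟨hfi, hi⟩⟩
        · exact ⟨⟨0, hn⟩, fun h => absurd h hg⟩
      choose ind hind using hindex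
      refine ⟨bb, e, ind, fun _ => ⟨?_, fun g hg => hind g hg, hd1, hd0, hident⟩⟩
      rwa [Module.finrank_fin_fun] at hcard
    · exact ⟨∅, fun _ => 0, fun _ => ⟨0, hn⟩, fun h => absurd h hp⟩
  choose b e ind hb using stepB
  -- Finiteness of the set of extreme points
  have key_inj : ∀ p ∈ V, ∀ q ∈ V, ((b p).image (ind p) ⊆ (b q).image (ind q)) →
      (∀ g ∈ b p, g q = g p) := by
    intro p hp q hq hsub g hg
    have hi : ind p g ∈ (b q).image (ind q) := hsub (Finset.mem_image_of_mem _ hg)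
    obtain ⟨g', hg', hgi⟩ := Finset.mem_image.1 hi
    have h2 := ((hb q hq).2.1 g' hg')
    have htq : f (ind p g) q = a (ind p g) := by rw [← hgi]; exact h2.2
    have h3 := ((hb p hp).2.1 g hg)
    rw [← h3.1, htq, h3.2]
  have diff_zero : ∀ p ∈ V, ∀ q : Fin d → ℝ, (∀ g ∈ b p, g q = g p) → q - p = 0 := by
    intro p hp q hzero
    have hident := (hb p hp).2.2.2.2
    have := hident (q - p)
    rw [Finset.sum_congr rfl (fun g hg => by
      rw [map_sub, hzero g hg, sub_self, neg_zero, zero_smul])] at this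
    simpa using this
  have hinj0 : Set.InjOn (fun p => (b p).image (ind p)) V := by
    intro p hp q hq hpq
    simp only at hpq
    have h1 : ∀ g ∈ b p, g q = g p := key_inj p hp q hq (le_of_eq hpq)
    have := diff_zero p hp q h1
    have hqp : q = p := by rwa [sub_eq_zero] at this
    exact hqp.symm
  have hfin : V.Finite := Set.Finite.of_finite_image (Set.toFinite _) hinj0
  refine ⟨hfin, ?_⟩
  -- generic functional
  obtain ⟨c, hc⟩ : ∃ c : (Fin d → ℝ) →ₗ[ℝ] ℝ, ∀ p ∈ V, ∀ g ∈ b p, c (e p g) ≠ 0 := by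
    have hZfin : (⋃ p ∈ V, (e p '' (b p : Set _))).Finite :=
      hfin.biUnion (fun p _ => Set.toFinite _)
    have hZ0 : ∀ z ∈ ⋃ p ∈ V, (e p '' (b p : Set _)), z ≠ 0 := by
      rintro z hz rfl
      obtain ⟨p, hp, hz⟩ := Set.mem_iUnion₂.1 hz
      obtain ⟨g, hg, hgz⟩ := hz
      have := (hb p hp).2.2.1 g hg
      rw [hgz, map_zero] at this
      norm_num at this
    obtain ⟨c, hc⟩ := exists_dual_ne_zero_on_finite hZfin hZ0
    exact ⟨c, fun p hp g hg => hc _ (Set.mem_iUnion₂.2 ⟨p, hp, Set.mem_image_of_mem _ hg⟩)⟩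
  -- sign and small subset at each extreme point
  set Pos : (Fin d → ℝ) → Finset ((Fin d → ℝ) →ₗ[ℝ] ℝ) :=
    fun p => (b p).filter (fun g => 0 < c (e p g)) with hPos
  set Neg : (Fin d → ℝ) → Finset ((Fin d → ℝ) →ₗ[ℝ] ℝ) :=
    fun p => (b p).filter (fun g => c (e p g) < 0) with hNeg
  set sg : (Fin d → ℝ) → Bool := fun p => decide ((Neg p).card ≤ (Pos p).card) with hsg
  set Sm : (Fin d → ℝ) → Finset ((Fin d → ℝ) →ₗ[ℝ] ℝ) :=
    fun p => if sg p then Neg p else Pos p with hSm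
  set Φ : (Fin d → ℝ) → Finset (Fin n) × Bool :=
    fun p => ((Sm p).image (ind p), sg p) with hΦ
  have hSmb : ∀ p, Sm p ⊆ b p := by
    intro p
    rw [hSm]
    by_cases h : sg p <;> simp [h, hPos, hNeg, Finset.filter_subset]
  have hPNdisj : ∀ p, Disjoint (Pos p) (Neg p) := by
    intro p
    rw [Finset.disjoint_left]
    intro g hg1 hg2
    have h1 := (Finset.mem_filter.1 hg1).2
    have h2 := (Finset.mem_filter.1 hg2).2
    linarith
  have hPNcard : ∀ p ∈ V, (Pos p).card + (Neg p).card ≤ d := by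
    intro p hp
    rw [← Finset.card_union_of_disjoint (hPNdisj p)]
    refine (Finset.card_le_card ?_).trans (hb p hp).1
    exact Finset.union_subset (Finset.filter_subset _ _) (Finset.filter_subset _ _)
  have hScard : ∀ p ∈ V, (Φ p).1.card ≤ d / 2 := by
    intro p hp
    refine (Finset.card_image_le).trans ?_
    have := hPNcard p hp
    by_cases h : sg p
    · have hle : (Neg p).card ≤ (Pos p).card := by
        have : decide ((Neg p).card ≤ (Pos p).card) = true := h
        exact of_decide_eq_true this
      have hSmeq : Sm p = Neg p := by simp [hSm, h]
      rw [hSmeq]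
      omega
    · have hle : ¬ ((Neg p).card ≤ (Pos p).card) := by
        intro hcon
        exact h (decide_eq_true hcon)
      have hSmeq : Sm p = Pos p := by simp [hSm, h]
      rw [hSmeq]
      omega
  -- the cone lemma
  have hcone : ∀ p ∈ V, ∀ y : Fin d → ℝ, y ≠ 0 → (∀ g ∈ b p, g y ≤ 0) →
      (∀ g ∈ Sm p, g y = 0) → (if sg p then 0 < c y else c y < 0) := by
    intro p hp y hy0 hby hSy
    have hident := (hb p hp).2.2.2.2
    have hcy : c y = ∑ g ∈ b p, (-(g y)) * c (e p g) := by
      conv_lhs => rw [hident y]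
      rw [map_sum]
      exact Finset.sum_congr rfl (fun g _ => by rw [map_smul, smul_eq_mul])
    have hex : ∃ g0 ∈ b p, g0 y ≠ 0 := by
      by_contra hcon
      push_neg at hcon
      apply hy0
      have := hident y
      rw [Finset.sum_congr rfl (fun g hg => by
        rw [hcon g hg, neg_zero, zero_smul])] at this
      simpa using this
    obtain ⟨g0, hg0b, hg0y⟩ := hex
    have hg0neg : g0 y < 0 := lt_of_le_of_ne (hby g0 hg0b) hg0y
    have hg0nS : g0 ∉ Sm p := fun h => hg0y (hSy g0 h)
    by_cases h : sg p
    · rw [if_pos h]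
      have hSmNeg : Sm p = Neg p := by simp [hSm, h]
      rw [hcy]
      apply Finset.sum_pos'
      · intro g hg
        by_cases hgN : g ∈ Neg p
        · rw [hSy g (hSmNeg ▸ hgN), neg_zero, zero_mul]
        · have hpos : 0 < c (e p g) := by
            rcases lt_trichotomy (c (e p g)) 0 with h1 | h1 | h1
            · exact absurd (Finset.mem_filter.2 ⟨hg, h1⟩) hgN
            · exact absurd h1 (hc p hp g hg)
            · exact h1
          exact mul_nonneg (by linarith [hby g hg]) (le_of_lt hpos)
      · refine ⟨g0, hg0b, ?_⟩
        have hg0nN : g0 ∉ Neg p := hSmNeg ▸ hg0nS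
        have hpos : 0 < c (e p g0) := by
          rcases lt_trichotomy (c (e p g0)) 0 with h1 | h1 | h1
          · exact absurd (Finset.mem_filter.2 ⟨hg0b, h1⟩) hg0nN
          · exact absurd h1 (hc p hp g0 hg0b)
          · exact h1
        exact mul_pos (by linarith) hpos
    · rw [if_neg h]
      have hSmPos : Sm p = Pos p := by simp [hSm, h]
      have hneg : 0 < ∑ g ∈ b p, (g y) * c (e p g) := by
        apply Finset.sum_pos'
        · intro g hg
          by_cases hgP : g ∈ Pos p
          · rw [hSy g (hSmPos ▸ hgP), zero_mul]
          · have hneg' : c (e p g) < 0 := by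
              rcases lt_trichotomy (c (e p g)) 0 with h1 | h1 | h1
              · exact h1
              · exact absurd h1 (hc p hp g hg)
              · exact absurd (Finset.mem_filter.2 ⟨hg, h1⟩) hgP
            nlinarith [hby g hg]
        · refine ⟨g0, hg0b, ?_⟩
          have hg0nP : g0 ∉ Pos p := hSmPos ▸ hg0nS
          have hneg' : c (e p g0) < 0 := by
            rcases lt_trichotomy (c (e p g0)) 0 with h1 | h1 | h1
            · exact h1
            · exact absurd h1 (hc p hp g0 hg0b)
            · exact absurd (Finset.mem_filter.2 ⟨hg0b, h1⟩) hg0nP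
          exact mul_pos_of_neg_of_neg hg0neg hneg'
      have heq : c y = -∑ g ∈ b p, (g y) * c (e p g) := by
        rw [hcy, ← Finset.sum_neg_distrib]
        exact Finset.sum_congr rfl (fun g _ => by ring)
      rw [heq]
      linarith
  -- injectivity of Φ
  have hkey2 : ∀ p ∈ V, ∀ q ∈ V, p ≠ q → Φ p = Φ q →
      (if sg p then 0 < c (q - p) else c (q - p) < 0) := by
    intro p hp q hq hne hpq
    apply hcone p hp (q - p) (sub_ne_zero.2 (Ne.symm hne))
    · intro g hg
      have h3 := (hb p hp).2.1 g hg
      have hgq : g q ≤ a (ind p g) := by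
        conv_lhs => rw [← h3.1]
        exact (hmem q).1 hq.1 (ind p g)
      have hgp : g p = a (ind p g) := by
        conv_lhs => rw [← h3.1]
        exact h3.2
      rw [map_sub]
      linarith
    · intro g hg
      have hgb : g ∈ b p := hSmb p hg
      have h3 := (hb p hp).2.1 g hgb
      have hi : ind p g ∈ (Sm q).image (ind q) := by
        have : (Sm q).image (ind q) = (Φ q).1 := rfl
        rw [this, ← hpq]
        exact Finset.mem_image_of_mem _ hg
      obtain ⟨g', hg', hgi⟩ := Finset.mem_image.1 hi
      have h4 := (hb q hq).2.1 g' (hSmb q hg')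
      have htq : f (ind p g) q = a (ind p g) := by rw [← hgi]; exact h4.2
      have hgq : g q = a (ind p g) := by
        conv_lhs => rw [← h3.1]
        exact htq
      have hgp : g p = a (ind p g) := by
        conv_lhs => rw [← h3.1]
        exact h3.2
      rw [map_sub, hgq, hgp, sub_self]
  have hinj : Set.InjOn Φ V := by
    intro p hp q hq hpq
    by_contra hne
    have h1 := hkey2 p hp q hq hne hpq
    have h2 := hkey2 q hq p hp (Ne.symm hne) hpq.symm
    have hsgeq : sg p = sg q := congrArg Prod.snd hpq
    have hcpq : c (p - q) = -c (q - p) := by rw [← map_neg]; congr 1; abel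
    rw [← hsgeq] at h2
    by_cases hs : sg p
    · rw [if_pos hs] at h1 h2
      rw [hcpq] at h2
      linarith
    · rw [if_neg hs] at h1 h2
      rw [hcpq] at h2
      linarith
  -- counting
  set T : Finset (Finset (Fin n) × Bool) :=
    (Finset.univ.powerset.filter (fun S : Finset (Fin n) => S.card ≤ d / 2)) ×ˢ Finset.univ
    with hT
  have hmap : ∀ p ∈ V, Φ p ∈ (T : Set (Finset (Fin n) × Bool)) := by
    intro p hp
    rw [Finset.mem_coe, hT, Finset.mem_product]
    exact ⟨Finset.mem_filter.2 ⟨Finset.mem_powerset.2 (Finset.subset_univ _), hScard p hp⟩,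
      Finset.mem_univ _⟩
  have hcount := Set.ncard_le_ncard_of_injOn Φ hmap hinj (T.finite_toSet)
  rw [Set.ncard_coe_finset] at hcount
  refine hcount.trans ?_
  have hTcard : T.card =
      (Finset.univ.powerset.filter (fun S : Finset (Fin n) => S.card ≤ d / 2)).card * 2 := by
    rw [hT, Finset.card_product]
    simp
  have hfil : (Finset.univ.powerset.filter (fun S : Finset (Fin n) => S.card ≤ d / 2)) ⊆
      (Finset.range (d / 2 + 1)).biUnion (fun k => Finset.univ.powersetCard k) := by
    intro S hS
    have := (Finset.mem_filter.1 hS).2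
    exact Finset.mem_biUnion.2 ⟨S.card, Finset.mem_range.2 (Nat.lt_succ_of_le this),
      Finset.mem_powersetCard.2 ⟨Finset.subset_univ _, rfl⟩⟩
  have h5 : (Finset.univ.powerset.filter (fun S : Finset (Fin n) => S.card ≤ d / 2)).card ≤
      ∑ k ∈ Finset.range (d / 2 + 1), n.choose k := by
    refine (Finset.card_le_card hfil).trans ?_
    refine (Finset.card_biUnion_le).trans (le_of_eq ?_)
    refine Finset.sum_congr rfl (fun k _ => ?_)
    rw [Finset.card_powersetCard, Finset.card_univ, Fintype.card_fin]
  have h6 : ∑ k ∈ Finset.range (d / 2 + 1), n.choose k ≤ (d / 2 + 1) * n ^ (d / 2) := by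
    calc ∑ k ∈ Finset.range (d / 2 + 1), n.choose k
        ≤ ∑ _k ∈ Finset.range (d / 2 + 1), n ^ (d / 2) := by
          refine Finset.sum_le_sum (fun k hk => ?_)
          exact (Nat.choose_le_pow n k).trans
            (Nat.pow_le_pow_right hn (Nat.lt_succ_iff.1 (Finset.mem_range.1 hk)))
      _ = (d / 2 + 1) * n ^ (d / 2) := by
          rw [Finset.sum_const, Finset.card_range, smul_eq_mul]
  calc T.card = _ * 2 := hTcard
    _ ≤ ((d / 2 + 1) * n ^ (d / 2)) * 2 := Nat.mul_le_mul_right 2 (h5.trans h6)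
    _ = 2 * (d / 2 + 1) * n ^ (d / 2) := by ring
end

section
/- For every integer d ≥ 1 there exists a constant C > 0 such that the following holds for all integers n ≥ m ≥ 1: given n closed halfspaces h_1, …, h_n in ℝ^d, each assigned one of m colors, whose bounding hyperplanes are in general position (the n bounding hyperplanes are pairwise distinct, every d of them intersect in exactly one point, and no point of ℝ^d lies on more than d of them), and letting P_j be the intersection of the halfspaces of color j, the set of vertices of the subdivision induced by P_1, …, P_m has cardinality at most C · m^⌈d/2⌉ · n^⌊d/2⌋. -/
open Set

section Aux
open Finset Filter

/-- A linear functional nonvanishing on a given finite set of nonzero vectors. -/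
lemma exists_generic (d : ℕ) (E : Set (Fin d → ℝ)) (hfin : E.Finite) (hE : ∀ v ∈ E, v ≠ 0) :
    ∃ φ : (Fin d → ℝ) →ₗ[ℝ] ℝ, ∀ v ∈ E, φ v ≠ 0 := by
  classical
  revert hE
  refine Set.Finite.induction_on
    (motive := fun E _ => (∀ v ∈ E, v ≠ 0) → ∃ φ : (Fin d → ℝ) →ₗ[ℝ] ℝ, ∀ v ∈ E, φ v ≠ 0)
    E hfin (fun _ => ⟨0, by simp⟩) ?_
  intro v₀ Erest hv₀ hrest ih hE
  obtain ⟨φ, hφ⟩ := ih (fun v hv => hE v (Set.mem_insert_of_mem _ hv))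
  have hv0ne : v₀ ≠ 0 := hE v₀ (Set.mem_insert _ _)
  obtain ⟨k, hk⟩ : ∃ k, v₀ k ≠ 0 := by
    by_contra h; push_neg at h; exact hv0ne (funext h)
  set ψ : (Fin d → ℝ) →ₗ[ℝ] ℝ := LinearMap.proj k with hψdef
  have hψv₀ : ψ v₀ ≠ 0 := hk
  -- finite set of bad parameters t
  obtain ⟨t, ht⟩ := (Set.Finite.insert (-(φ v₀)/(ψ v₀))
    ((hrest.image (fun v => -(φ v)/(ψ v))))).infinite_compl.nonempty
  refine ⟨φ + t • ψ, ?_⟩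
  have htne : ∀ v ∈ insert v₀ Erest, t ≠ -(φ v)/(ψ v) := by
    intro v hv
    rcases hv with rfl | hv
    · intro h; exact ht (h ▸ Set.mem_insert _ _)
    · intro h; exact ht (Set.mem_insert_of_mem _ ⟨v, hv, h.symm⟩)
  intro v hv
  simp only [LinearMap.add_apply, LinearMap.smul_apply, smul_eq_mul]
  by_cases hψv : ψ v = 0
  · rcases hv with rfl | hv
    · exact absurd hψv hψv₀
    · simpa [hψv] using hφ v hv
  · intro h
    apply htne v hv
    field_simp
    linarith [h]

lemma charge_core {d n m : ℕ} (f : Fin n → ((Fin d → ℝ) →ₗ[ℝ] ℝ)) (a : Fin n → ℝ)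
    (color : Fin n → Fin m) (p : Fin d → ℝ)
    (S : Finset (Fin n)) (e : Fin n → (Fin d → ℝ))
    (htight : ∀ i ∈ S, f i p = a i)
    (hdual : ∀ i ∈ S, ∀ k ∈ S, f k (e i) = if k = i then -1 else 0)
    (hspan : ∀ v : Fin d → ℝ, (∀ k ∈ S, f k v = 0) → v = 0)
    (φ : (Fin d → ℝ) →ₗ[ℝ] ℝ)
    (Up : Finset (Fin n)) (hUpS : Up ⊆ S)
    (hNeg : ∀ i ∈ S, i ∉ Up → φ (e i) < 0) :
    ∀ x : Fin d → ℝ, (∀ i ∈ Up, f i x = a i) →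
      (∀ j ∈ (S \ Up).image color, ∀ k, color k = j → f k x ≤ a k) →
      x ≠ p → φ x < φ p := by
  classical
  intro x hxE hxD hne
  set v : Fin d → ℝ := x - p with hv
  -- decomposition of v in the edge basis
  have hdecomp : v = ∑ i ∈ S, (-(f i v)) • e i := by
    have hw : ∀ k ∈ S, f k (v - ∑ i ∈ S, (-(f i v)) • e i) = 0 := by
      intro k hk
      rw [map_sub, map_sum]
      have : ∀ i ∈ S, f k ((-(f i v)) • e i) = if i = k then f i v else 0 := by
        intro i hi
        rw [map_smul, smul_eq_mul, hdual i hi k hk]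
        by_cases h : k = i
        · subst h; simp
        · rw [if_neg h, if_neg (fun hh : i = k => h hh.symm)]; ring
      rw [Finset.sum_congr rfl this, Finset.sum_ite_eq' S k (fun i => f i v), if_pos hk]
      ring
    exact sub_eq_zero.mp (hspan _ hw)
  -- the coefficients on Up vanish, on the rest they are nonneg
  have hUpzero : ∀ i ∈ Up, f i v = 0 := by
    intro i hi
    rw [hv, map_sub, hxE i hi, htight i (hUpS hi), sub_self]
  have hDnn : ∀ i ∈ S \ Up, 0 ≤ -(f i v) := by
    intro i hi
    have hle : f i x ≤ a i :=
      hxD (color i) (Finset.mem_image_of_mem color hi) i rfl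
    have := htight i (Finset.mem_sdiff.mp hi).1
    rw [hv, map_sub]
    linarith
  -- value of φ on v
  have hφv : φ v = ∑ i ∈ S, (-(f i v)) * φ (e i) := by
    conv_lhs => rw [hdecomp, map_sum]
    exact Finset.sum_congr rfl fun i _ => by rw [map_smul, smul_eq_mul]
  have hsplit : ∑ i ∈ S, (-(f i v)) * φ (e i)
      = ∑ i ∈ S \ Up, (-(f i v)) * φ (e i) := by
    rw [← Finset.sum_sdiff hUpS]
    have : ∑ i ∈ Up, (-(f i v)) * φ (e i) = 0 :=
      Finset.sum_eq_zero fun i hi => by rw [hUpzero i hi]; ring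
    rw [this, add_zero]
  have hterms : ∀ i ∈ S \ Up, (-(f i v)) * φ (e i) ≤ 0 := by
    intro i hi
    have h1 := hDnn i hi
    have h2 := hNeg i (Finset.mem_sdiff.mp hi).1 (Finset.mem_sdiff.mp hi).2
    exact mul_nonpos_of_nonneg_of_nonpos h1 h2.le
  have hsum_le : φ v ≤ 0 := by
    rw [hφv, hsplit]
    exact Finset.sum_nonpos hterms
  -- strictness
  have hstrict : φ v ≠ 0 := by
    intro h0
    have hall : ∀ i ∈ S \ Up, (-(f i v)) * φ (e i) = 0 := by
      rw [hφv, hsplit] at h0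
      exact (Finset.sum_eq_zero_iff_of_nonpos hterms).mp h0
    have hzero : ∀ k ∈ S, f k v = 0 := by
      intro k hk
      by_cases hku : k ∈ Up
      · exact hUpzero k hku
      · have hk' : k ∈ S \ Up := Finset.mem_sdiff.mpr ⟨hk, hku⟩
        have := hall k hk'
        have hφne : φ (e k) ≠ 0 := (hNeg k hk hku).ne
        have : -(f k v) = 0 := by
          rcases mul_eq_zero.mp this with h | h
          · exact h
          · exact absurd h hφne
        linarith
    exact hne (by have := hspan v hzero; rw [hv] at this; exact sub_eq_zero.mp this)
  have : φ v < 0 := lt_of_le_of_ne hsum_le hstrict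
  have hxp : φ v = φ x - φ p := by rw [hv, map_sub]
  linarith

section tight
variable {d n m : ℕ} (f : Fin n → ((Fin d → ℝ) →ₗ[ℝ] ℝ)) (a : Fin n → ℝ)
    (color : Fin n → Fin m)

/-- shorthand for the color polyhedra -/
def colP : Fin m → Set (Fin d → ℝ) :=
  fun j => ⋂ i ∈ {i | color i = j}, {x : Fin d → ℝ | f i x ≤ a i}

lemma mem_colP {x : Fin d → ℝ} {j : Fin m} :
    x ∈ colP f a color j ↔ ∀ i, color i = j → f i x ≤ a i := by
  simp [colP]

/-- at a subdivision vertex, the functionals of the "relevant tight" constraints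
have trivial common kernel. -/
lemma vertex_tight (p : Fin d → ℝ)
    (hp : IsSubdivVertex (colP f a color) p) :
    ∀ v : Fin d → ℝ,
      (∀ i, f i p = a i → p ∈ colP f a color (color i) → f i v = 0) → v = 0 := by
  intro v hv
  -- find a suitable ε
  have heps : ∃ ε : ℝ, 0 < ε ∧ ∀ i, f i p < a i →
      (f i p + ε * f i v < a i ∧ f i p - ε * f i v < a i) := by
    have H : ∀ᶠ t in nhds (0:ℝ), ∀ i, f i p < a i →
        (f i p + t * f i v < a i ∧ f i p - t * f i v < a i) := by
      rw [Filter.eventually_all]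
      intro i
      by_cases hi : f i p < a i
      · have c1 : Tendsto (fun t : ℝ => f i p + t * f i v) (nhds 0) (nhds (f i p)) := by
          have : Continuous (fun t : ℝ => f i p + t * f i v) := by continuity
          simpa using this.tendsto 0
        have c2 : Tendsto (fun t : ℝ => f i p - t * f i v) (nhds 0) (nhds (f i p)) := by
          have : Continuous (fun t : ℝ => f i p - t * f i v) := by continuity
          simpa using this.tendsto 0
        filter_upwards [c1.eventually_lt_const hi, c2.eventually_lt_const hi] with t h1 h2 _
        exact ⟨h1, h2⟩
      · filter_upwards with t h
        exact absurd h hi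
    have H' : ∀ᶠ t in nhdsWithin (0:ℝ) (Set.Ioi 0), (0 < t ∧ ∀ i, f i p < a i →
        (f i p + t * f i v < a i ∧ f i p - t * f i v < a i)) :=
      (eventually_mem_nhdsWithin).and (H.filter_mono nhdsWithin_le_nhds)
    obtain ⟨ε, hε1, hε2⟩ := H'.exists
    exact ⟨ε, hε1, hε2⟩
  obtain ⟨ε, hε, hεlt⟩ := heps
  -- both p + ε v and p - ε v lie in every relevant P j
  have hPmem : ∀ j, p ∈ colP f a color j →
      (p + ε • v ∈ colP f a color j ∧ p - ε • v ∈ colP f a color j) := by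
    intro j hj
    constructor <;>
    · rw [mem_colP]
      intro i hij
      have hple : f i p ≤ a i := (mem_colP f a color).mp hj i hij
      rcases eq_or_lt_of_le hple with heq | hlt
      · have hfiv : f i v = 0 := hv i heq (hij ▸ hj)
        simp [map_add, map_sub, map_smul, hfiv, heq.le]
      · have := hεlt i hlt
        simp only [map_add, map_sub, map_smul, smul_eq_mul]
        linarith [this.1, this.2]
  -- hence both lie in every relevant minFace
  have hMF : ∀ (w : Fin d → ℝ), w = p + ε • v ∨ w = p - ε • v →
      w ∈ ⋂ j ∈ {j | p ∈ colP f a color j}, minFace (colP f a color j) p := by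
    intro w hw
    rw [Set.mem_iInter₂]
    intro j hj
    have hw1 : w ∈ colP f a color j := by
      rcases hw with rfl | rfl
      exacts [(hPmem j hj).1, (hPmem j hj).2]
    refine ⟨hw1, ?_⟩
    simp only [Set.mem_iInter]
    intro g b _ hgp hsub
    have h1 : g (p + ε • v) ≤ b := hsub (hPmem j hj).1
    have h2 : g (p - ε • v) ≤ b := hsub (hPmem j hj).2
    simp only [map_add, map_sub, map_smul, smul_eq_mul] at h1 h2
    have hgv : g v = 0 := by nlinarith
    rcases hw with rfl | rfl <;>
      simp only [Set.mem_setOf_eq, map_add, map_sub, map_smul, smul_eq_mul, hgv] <;>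
      simpa using hgp
  have h1 : p + ε • v = p := by
    have := hMF (p + ε • v) (Or.inl rfl)
    rw [IsSubdivVertex] at hp
    rw [hp] at this
    exact this
  have : ε • v = 0 := by
    have := congrArg (· - p) h1
    simpa using this
  rcases smul_eq_zero.mp this with h | h
  · exact absurd h hε.ne'
  · exact h
end tight

section structure'
variable {d n m : ℕ}

lemma vertex_structure (f : Fin n → ((Fin d → ℝ) →ₗ[ℝ] ℝ)) (a : Fin n → ℝ)
    (color : Fin n → Fin m)
    (hmax : ∀ x : Fin d → ℝ, ({i : Fin n | f i x = a i}).ncard ≤ d)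
    (p : Fin d → ℝ)
    (hp : IsSubdivVertex (colP f a color) p) :
    ∃ (S : Finset (Fin n)) (e : Fin n → (Fin d → ℝ)),
      S.card = d ∧
      (∀ i ∈ S, f i p = a i) ∧
      (∀ i ∈ S, p ∈ colP f a color (color i)) ∧
      (∀ i ∈ S, ∀ k ∈ S, f k (e i) = if k = i then -1 else 0) ∧
      (∀ i ∈ S, e i ≠ 0) ∧
      (∀ v : Fin d → ℝ, (∀ k ∈ S, f k v = 0) → v = 0) := by
  classical
  set S : Finset (Fin n) :=
    Finset.univ.filter (fun i => f i p = a i ∧ p ∈ colP f a color (color i)) with hSdef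
  have hmemS : ∀ i, i ∈ S ↔ (f i p = a i ∧ p ∈ colP f a color (color i)) := by
    intro i; simp [hSdef]
  have hspan : ∀ v : Fin d → ℝ, (∀ k ∈ S, f k v = 0) → v = 0 := by
    intro v hv
    exact vertex_tight f a color p hp v (fun i h1 h2 => hv i ((hmemS i).mpr ⟨h1, h2⟩))
  -- the joint evaluation map
  set L : (Fin d → ℝ) →ₗ[ℝ] (↥S → ℝ) := LinearMap.pi (fun i : ↥S => f i.1) with hLdef
  have hinj : Function.Injective L := by
    rw [← LinearMap.ker_eq_bot, LinearMap.ker_eq_bot']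
    intro v hv
    apply hspan
    intro k hk
    exact congrFun hv ⟨k, hk⟩
  have hfrV : Module.finrank ℝ (Fin d → ℝ) = d := Module.finrank_fin_fun ℝ
  have hfrW : Module.finrank ℝ (↥S → ℝ) = S.card := by
    rw [Module.finrank_fintype_fun_eq_card, Fintype.card_coe]
  have hge : d ≤ S.card := by
    have := LinearMap.finrank_le_finrank_of_injective hinj
    rwa [hfrV, hfrW] at this
  have hle : S.card ≤ d := by
    have hsub : (↑S : Set (Fin n)) ⊆ {i | f i p = a i} := by
      intro i hi
      exact ((hmemS i).mp hi).1
    calc S.card = (↑S : Set (Fin n)).ncard := (Set.ncard_coe_finset S).symm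
      _ ≤ ({i | f i p = a i}).ncard := Set.ncard_le_ncard hsub (Set.toFinite _)
      _ ≤ d := hmax p
  have hcard : S.card = d := le_antisymm hle hge
  have hfr : Module.finrank ℝ (Fin d → ℝ) = Module.finrank ℝ (↥S → ℝ) := by
    rw [hfrV, hfrW, hcard]
  set Φ := LinearMap.linearEquivOfInjective L hinj hfr with hΦdef
  have hΦapp : ∀ x, Φ x = L x := fun x => rfl
  set e : Fin n → (Fin d → ℝ) := fun i =>
    if h : i ∈ S then Φ.symm (Pi.single (⟨i, h⟩ : ↥S) (-1)) else 0 with hedef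
  refine ⟨S, e, hcard, fun i hi => ((hmemS i).mp hi).1, fun i hi => ((hmemS i).mp hi).2,
    ?_, ?_, hspan⟩
  · intro i hi k hk
    have : f k (e i) = L (e i) ⟨k, hk⟩ := rfl
    rw [this, hedef]
    simp only [dif_pos hi]
    rw [← hΦapp, Φ.apply_symm_apply, Pi.single_apply]
    by_cases h : k = i
    · subst h; simp
    · rw [if_neg (by simpa [Subtype.ext_iff] using h), if_neg h]
  · intro i hi h0
    rw [hedef] at h0
    simp only [dif_pos hi] at h0
    have h1 : Pi.single (⟨i, hi⟩ : ↥S) (-1 : ℝ) = (0 : ↥S → ℝ) := by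
      have h2 := congrArg Φ h0
      rw [Φ.apply_symm_apply] at h2
      simpa using h2
    have h3 := congrFun h1 ⟨i, hi⟩
    simp at h3
end structure'

lemma count_aux (d n m : ℕ) (hm : 1 ≤ m) (hmn : m ≤ n) :
    (Set.ncard {t : Bool × Finset (Fin n) × Finset (Fin m) |
      t.2.1.card ≤ d / 2 ∧ t.2.2.card ≤ d - t.2.1.card})
      ≤ (2 * (d + 1) * (d + 1)) * m ^ ((d + 1) / 2) * n ^ (d / 2) := by
  classical
  set A : Set (Bool × Finset (Fin n) × Finset (Fin m)) :=
    {t | t.2.1.card ≤ d / 2 ∧ t.2.2.card ≤ d - t.2.1.card} with hA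
  set B : Finset (Bool × Finset (Fin n) × Finset (Fin m)) :=
    Finset.univ ×ˢ ((Finset.range (d / 2 + 1)).biUnion (fun e =>
      (Finset.univ.powersetCard e) ×ˢ ((Finset.range (d - e + 1)).biUnion
        (fun c => Finset.univ.powersetCard c)))) with hB
  have hsub : A.toFinset ⊆ B := by
    intro t ht
    rw [Set.mem_toFinset] at ht
    obtain ⟨h1, h2⟩ := ht
    rw [hB, Finset.mem_product]
    refine ⟨Finset.mem_univ _, ?_⟩
    rw [Finset.mem_biUnion]
    refine ⟨t.2.1.card, Finset.mem_range.mpr (by omega), ?_⟩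
    rw [Finset.mem_product]
    constructor
    · rw [Finset.mem_powersetCard]
      exact ⟨Finset.subset_univ _, rfl⟩
    · rw [Finset.mem_biUnion]
      refine ⟨t.2.2.card, Finset.mem_range.mpr (by omega), ?_⟩
      rw [Finset.mem_powersetCard]
      exact ⟨Finset.subset_univ _, rfl⟩
  have hstep : A.ncard ≤ B.card := by
    rw [Set.ncard_eq_toFinset_card']
    exact Finset.card_le_card hsub
  have hinner : ∀ e ∈ Finset.range (d / 2 + 1),
      ((((Finset.univ : Finset (Fin n)).powersetCard e) ×ˢ ((Finset.range (d - e + 1)).biUnion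
        (fun c => (Finset.univ : Finset (Fin m)).powersetCard c))).card)
      ≤ (d + 1) * (n ^ (d / 2) * m ^ ((d + 1) / 2)) := by
    intro e he
    rw [Finset.mem_range] at he
    have he' : e ≤ d / 2 := by omega
    rw [Finset.card_product, Finset.card_powersetCard, Finset.card_univ, Fintype.card_fin]
    have h1 : n.choose e ≤ n ^ e := Nat.choose_le_pow n e
    have h2 : ((Finset.range (d - e + 1)).biUnion
        (fun c => (Finset.univ : Finset (Fin m)).powersetCard c)).card
        ≤ (d - e + 1) * m ^ (d - e) := by
      calc _ ≤ ∑ c ∈ Finset.range (d - e + 1),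
            ((Finset.univ : Finset (Fin m)).powersetCard c).card :=
          Finset.card_biUnion_le
        _ ≤ ∑ c ∈ Finset.range (d - e + 1), m ^ (d - e) := by
            apply Finset.sum_le_sum
            intro c hc
            have hpc : ((Finset.univ : Finset (Fin m)).powersetCard c).card = m.choose c := by
              rw [Finset.card_powersetCard, Finset.card_univ, Fintype.card_fin]
            rw [hpc]
            calc m.choose c ≤ m ^ c := Nat.choose_le_pow m c
              _ ≤ m ^ (d - e) := Nat.pow_le_pow_right hm (by
                  rw [Finset.mem_range] at hc; omega)
        _ = (d - e + 1) * m ^ (d - e) := by rw [Finset.sum_const, Finset.card_range, smul_eq_mul]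
    calc n.choose e * _ ≤ n ^ e * ((d - e + 1) * m ^ (d - e)) :=
        Nat.mul_le_mul h1 h2
      _ ≤ n ^ e * ((d + 1) * m ^ (d - e)) := by
          apply Nat.mul_le_mul_left
          apply Nat.mul_le_mul_right
          omega
      _ = (d + 1) * (n ^ e * m ^ (d - e)) := by ring
      _ ≤ (d + 1) * (n ^ (d / 2) * m ^ ((d + 1) / 2)) := by
          apply Nat.mul_le_mul_left
          have hde : d - e = (d / 2 - e) + (d + 1) / 2 := by omega
          rw [hde, pow_add]
          calc n ^ e * (m ^ (d / 2 - e) * m ^ ((d + 1) / 2))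
              ≤ n ^ e * (n ^ (d / 2 - e) * m ^ ((d + 1) / 2)) := by
                apply Nat.mul_le_mul_left
                apply Nat.mul_le_mul_right
                exact Nat.pow_le_pow_left hmn _
            _ = n ^ (e + (d / 2 - e)) * m ^ ((d + 1) / 2) := by rw [pow_add]; ring
            _ = n ^ (d / 2) * m ^ ((d + 1) / 2) := by
                congr 2
                omega
  have hBcard : B.card ≤ 2 * ((d / 2 + 1) * ((d + 1) * (n ^ (d / 2) * m ^ ((d + 1) / 2)))) := by
    rw [hB, Finset.card_product, Finset.card_univ]
    have : Fintype.card Bool = 2 := by simp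
    rw [this]
    apply Nat.mul_le_mul_left
    apply le_trans Finset.card_biUnion_le
    apply le_trans (Finset.sum_le_sum hinner)
    rw [Finset.sum_const, Finset.card_range, smul_eq_mul]
  calc A.ncard ≤ B.card := hstep
    _ ≤ 2 * ((d / 2 + 1) * ((d + 1) * (n ^ (d / 2) * m ^ ((d + 1) / 2)))) := hBcard
    _ ≤ (2 * (d + 1) * (d + 1)) * m ^ ((d + 1) / 2) * n ^ (d / 2) := by
        have h1 : d / 2 + 1 ≤ d + 1 := by omega
        calc 2 * ((d / 2 + 1) * ((d + 1) * (n ^ (d / 2) * m ^ ((d + 1) / 2))))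
            ≤ 2 * ((d + 1) * ((d + 1) * (n ^ (d / 2) * m ^ ((d + 1) / 2)))) := by
              apply Nat.mul_le_mul_left
              exact Nat.mul_le_mul_right _ h1
          _ = (2 * (d + 1) * (d + 1)) * m ^ ((d + 1) / 2) * n ^ (d / 2) := by ring

/-- Charging a vertex: produce the data `(sign, equality set, color set)`. -/
lemma charge_vertex {d n m : ℕ} (f : Fin n → ((Fin d → ℝ) →ₗ[ℝ] ℝ)) (a : Fin n → ℝ)
    (color : Fin n → Fin m) (p : Fin d → ℝ)
    (S : Finset (Fin n)) (e : Fin n → (Fin d → ℝ))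
    (hcard : S.card = d)
    (htight : ∀ i ∈ S, f i p = a i)
    (hmemb : ∀ i ∈ S, p ∈ colP f a color (color i))
    (hdual : ∀ i ∈ S, ∀ k ∈ S, f k (e i) = if k = i then -1 else 0)
    (hspan : ∀ v : Fin d → ℝ, (∀ k ∈ S, f k v = 0) → v = 0)
    (φ : (Fin d → ℝ) →ₗ[ℝ] ℝ) (hφ : ∀ i ∈ S, φ (e i) ≠ 0) :
    ∃ t : Bool × Finset (Fin n) × Finset (Fin m),
      t.2.1.card ≤ d / 2 ∧ t.2.2.card ≤ d - t.2.1.card ∧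
      (∀ i ∈ t.2.1, f i p = a i) ∧
      (∀ j ∈ t.2.2, ∀ k, color k = j → f k p ≤ a k) ∧
      (∀ x : Fin d → ℝ, (∀ i ∈ t.2.1, f i x = a i) →
        (∀ j ∈ t.2.2, ∀ k, color k = j → f k x ≤ a k) → x ≠ p →
        (cond t.1 (φ p < φ x) (φ x < φ p))) := by
  classical
  set Up : Finset (Fin n) := S.filter (fun i => 0 < φ (e i)) with hUp
  set Dn : Finset (Fin n) := S.filter (fun i => φ (e i) < 0) with hDn
  have hUpS : Up ⊆ S := Finset.filter_subset _ _
  have hDnS : Dn ⊆ S := Finset.filter_subset _ _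
  have hDn' : Dn = S.filter (fun i => ¬ 0 < φ (e i)) := by
    apply Finset.filter_congr
    intro i hi
    constructor
    · intro h; simp only [not_lt]; exact le_of_lt h
    · intro h; simp only [not_lt] at h; exact lt_of_le_of_ne h (hφ i hi)
  have hsum : Up.card + Dn.card = d := by
    have h1 : Dn.card = (S.filter (fun i => ¬ 0 < φ (e i))).card := by rw [hDn']
    rw [h1]
    exact (Finset.card_filter_add_card_filter_not
      (s := S) (fun i => 0 < φ (e i))).trans hcard
  have hcd : ∀ (T : Finset (Fin n)), T ⊆ S → ((S \ T).image color).card ≤ d - T.card := by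
    intro T hT
    calc ((S \ T).image color).card ≤ (S \ T).card := Finset.card_image_le
      _ = S.card - T.card := Finset.card_sdiff_of_subset hT
      _ = d - T.card := by rw [hcard]
  have hmb : ∀ (T : Finset (Fin n)), ∀ j ∈ (S \ T).image color, ∀ k, color k = j → f k p ≤ a k := by
    intro T j hj k hk
    obtain ⟨i, hi, rfl⟩ := Finset.mem_image.mp hj
    exact (mem_colP f a color).mp (hmemb i (Finset.mem_sdiff.mp hi).1) k hk
  by_cases hcase : Up.card ≤ d / 2
  · refine ⟨(false, Up, (S \ Up).image color), hcase, hcd Up hUpS, ?_, hmb Up, ?_⟩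
    · intro i hi; exact htight i (hUpS hi)
    · intro x hE hD hne
      simpa using charge_core f a color p S e htight hdual hspan φ Up hUpS
        (fun i hi hni => by
          have h1 := hφ i hi
          have h2 : ¬ 0 < φ (e i) := fun h => hni (Finset.mem_filter.mpr ⟨hi, h⟩)
          exact lt_of_le_of_ne (not_lt.mp h2) h1) x hE hD hne
  · refine ⟨(true, Dn, (S \ Dn).image color), show Dn.card ≤ d / 2 by omega, hcd Dn hDnS, ?_, hmb Dn, ?_⟩
    · intro i hi; exact htight i (hDnS hi)
    · intro x hE hD hne
      have := charge_core f a color p S e htight hdual hspan (-φ) Dn hDnS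
        (fun i hi hni => by
          have h1 := hφ i hi
          have h2 : ¬ φ (e i) < 0 := fun h => hni (Finset.mem_filter.mpr ⟨hi, h⟩)
          simp only [LinearMap.neg_apply, neg_neg, neg_lt, neg_zero]
          exact lt_of_le_of_ne (not_lt.mp h2) (Ne.symm h1)) x hE hD hne
      simp only [LinearMap.neg_apply, neg_lt_neg_iff] at this
      simpa using this

end Aux

/-- Upper bound under general position of the bounding hyperplanes. -/
theorem subdivision_vertices_upper_bound_general_position (d : ℕ) (hd : 1 ≤ d) :
    ∃ C : ℕ, 0 < C ∧
      ∀ (n m : ℕ), 1 ≤ m → m ≤ n →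
        ∀ (f : Fin n → ((Fin d → ℝ) →ₗ[ℝ] ℝ)) (a : Fin n → ℝ) (color : Fin n → Fin m),
          (∀ i, f i ≠ 0) →
          -- the n bounding hyperplanes are pairwise distinct
          (∀ i j : Fin n, i ≠ j → {x : Fin d → ℝ | f i x = a i} ≠ {x | f j x = a j}) →
          -- every d of them intersect in exactly one point
          (∀ S : Finset (Fin n), S.card = d →
            ∃ p : Fin d → ℝ, (⋂ i ∈ S, {x : Fin d → ℝ | f i x = a i}) = {p}) →
          -- no point lies on more than d of them
          (∀ x : Fin d → ℝ, ({i : Fin n | f i x = a i}).ncard ≤ d) →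
          {p | IsSubdivVertex
              (fun j : Fin m => ⋂ i ∈ {i | color i = j}, {x : Fin d → ℝ | f i x ≤ a i}) p}.Finite ∧
          {p | IsSubdivVertex
              (fun j : Fin m => ⋂ i ∈ {i | color i = j}, {x : Fin d → ℝ | f i x ≤ a i}) p}.ncard
            ≤ C * m ^ ((d + 1) / 2) * n ^ (d / 2) := by
  classical
  refine ⟨2 * (d + 1) * (d + 1), by positivity, ?_⟩
  intro n m hm hmn f a color hne0 hdist hgen hmax
  suffices h : {p | IsSubdivVertex (colP f a color) p}.Finite ∧
      {p | IsSubdivVertex (colP f a color) p}.ncard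
        ≤ (2 * (d + 1) * (d + 1)) * m ^ ((d + 1) / 2) * n ^ (d / 2) by
    exact h
  set Vert : Set (Fin d → ℝ) := {p | IsSubdivVertex (colP f a color) p} with hVdef
  -- choose structural data at each vertex
  have hstr : ∀ p : Fin d → ℝ, ∃ (S : Finset (Fin n)) (e : Fin n → (Fin d → ℝ)), p ∈ Vert →
      (S.card = d ∧
       (∀ i ∈ S, f i p = a i) ∧
       (∀ i ∈ S, p ∈ colP f a color (color i)) ∧
       (∀ i ∈ S, ∀ k ∈ S, f k (e i) = if k = i then -1 else 0) ∧
       (∀ i ∈ S, e i ≠ 0) ∧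
       (∀ v : Fin d → ℝ, (∀ k ∈ S, f k v = 0) → v = 0)) := by
    intro p
    by_cases hp : p ∈ Vert
    · obtain ⟨S, e, h⟩ := vertex_structure f a color hmax p hp
      exact ⟨S, e, fun _ => h⟩
    · exact ⟨∅, fun _ _ => 0, fun h => absurd h hp⟩
  choose S e hSe using hstr
  -- finiteness
  have hfin : Vert.Finite := by
    apply Set.Finite.subset (s := ⋃ T ∈ {T : Finset (Fin n) | T.card = d},
      ⋂ i ∈ T, {x : Fin d → ℝ | f i x = a i})
    · apply Set.Finite.biUnion (Set.toFinite _)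
      intro T hT
      obtain ⟨q, hq⟩ := hgen T hT
      rw [hq]
      exact Set.finite_singleton q
    · intro p hp
      obtain ⟨hcard, htight, -⟩ := hSe p hp
      exact Set.mem_biUnion (show S p ∈ {T : Finset (Fin n) | T.card = d} from hcard)
        (Set.mem_iInter₂.mpr (fun i hi => htight i hi))
  refine ⟨hfin, ?_⟩
  -- generic functional
  have hEfin : (⋃ p ∈ Vert, (e p) '' (↑(S p) : Set (Fin n))).Finite :=
    hfin.biUnion (fun p _ => (Set.toFinite _).image _)
  obtain ⟨φ, hφ⟩ := exists_generic d _ hEfin (by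
    rintro v hv
    simp only [Set.mem_iUnion, Set.mem_image] at hv
    obtain ⟨p, hp, i, hi, rfl⟩ := hv
    exact (hSe p hp).2.2.2.2.1 i hi)
  -- charging data for each vertex
  have hch : ∀ p : Fin d → ℝ, ∃ t : Bool × Finset (Fin n) × Finset (Fin m), p ∈ Vert →
      (t.2.1.card ≤ d / 2 ∧ t.2.2.card ≤ d - t.2.1.card ∧
       (∀ i ∈ t.2.1, f i p = a i) ∧
       (∀ j ∈ t.2.2, ∀ k, color k = j → f k p ≤ a k) ∧
       (∀ x : Fin d → ℝ, (∀ i ∈ t.2.1, f i x = a i) →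
         (∀ j ∈ t.2.2, ∀ k, color k = j → f k x ≤ a k) → x ≠ p →
         (cond t.1 (φ p < φ x) (φ x < φ p)))) := by
    intro p
    by_cases hp : p ∈ Vert
    · obtain ⟨hcard, htight, hmemb, hdual, hene, hspan⟩ := hSe p hp
      obtain ⟨t, ht⟩ := charge_vertex f a color p (S p) (e p) hcard htight hmemb hdual hspan φ
        (fun i hi => hφ _ (by
          simp only [Set.mem_iUnion, Set.mem_image]
          exact ⟨p, hp, i, hi, rfl⟩))
      exact ⟨t, fun _ => ht⟩
    · exact ⟨(false, ∅, ∅), fun h => absurd h hp⟩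
  choose χ hχ using hch
  -- injectivity
  have hinj : Set.InjOn χ Vert := by
    intro p hp q hq hpq
    by_contra hnepq
    obtain ⟨-, -, hpt, hpm, hpopt⟩ := hχ p hp
    obtain ⟨-, -, hqt, hqm, hqopt⟩ := hχ q hq
    rw [hpq] at hpt hpm hpopt
    have h1 := hpopt q hqt hqm (Ne.symm hnepq)
    have h2 := hqopt p hpt hpm hnepq
    cases hb : (χ q).1 <;> rw [hb] at h1 h2 <;> simp only [cond] at h1 h2 <;> linarith
  -- image is contained in the counting set
  have himg : χ '' Vert ⊆ {t : Bool × Finset (Fin n) × Finset (Fin m) |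
      t.2.1.card ≤ d / 2 ∧ t.2.2.card ≤ d - t.2.1.card} := by
    rintro t ⟨p, hp, rfl⟩
    obtain ⟨h1, h2, -⟩ := hχ p hp
    exact ⟨h1, h2⟩
  calc Vert.ncard = (χ '' Vert).ncard := (Set.ncard_image_of_injOn hinj).symm
    _ ≤ (Set.ncard {t : Bool × Finset (Fin n) × Finset (Fin m) |
          t.2.1.card ≤ d / 2 ∧ t.2.2.card ≤ d - t.2.1.card}) :=
        Set.ncard_le_ncard himg (Set.toFinite _)
    _ ≤ (2 * (d + 1) * (d + 1)) * m ^ ((d + 1) / 2) * n ^ (d / 2) := count_aux d n m hm hmn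
end

section
/- Let P_1, …, P_m be convex polyhedra in ℝ^d, each the intersection of finitely many closed halfspaces, and let S ⊆ {1, …, m} be nonempty. Then every extreme point of the intersection ⋂_{j ∈ S} P_j is a vertex of the subdivision induced by P_1, …, P_m. -/
open Set

/-!
If `x` lies in the face `F_j(p)` of every polyhedron `P_j` containing `p`, then the line
through `p` and `x` stays inside each such `P_j` near `p`: a defining halfspace is either
tight at `p`, and then also at `x`, so the whole line lies on its boundary, or it is slack
at `p`, and then it contains a neighbourhood of `p` on the line. Hence a small segment
through `p` in direction `x - p` lies in `⋂ j ∈ S, P j`, and extremality of `p` forces `x = p`.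
-/

open Filter Topology

section

variable {V : Type*} [AddCommGroup V] [Module ℝ V]

lemma eq_zero_of_mem_extremePoints_of_eventually_add_smul_mem {A : Set V} {p v : V}
    (hp : p ∈ A.extremePoints ℝ) (hline : ∀ᶠ t : ℝ in 𝓝 0, p + t • v ∈ A) : v = 0 := by
  have hneg : ∀ᶠ t : ℝ in 𝓝 0, p + (-t) • v ∈ A :=
    (continuous_neg.tendsto' (0 : ℝ) 0 neg_zero).eventually hline
  have hpunct : ∀ᶠ t : ℝ in 𝓝[≠] 0, t ≠ 0 := self_mem_nhdsWithin
  obtain ⟨t, ht, hplus, hminus⟩ :=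
    (hpunct.and ((hline.and hneg).filter_mono nhdsWithin_le_nhds)).exists
  have hseg : p ∈ openSegment ℝ (p + t • v) (p + (-t) • v) :=
    ⟨1 / 2, 1 / 2, by norm_num, by norm_num, by norm_num, by module⟩
  have hfix : p + t • v = p := hp.2 hplus hminus hseg
  exact (smul_eq_zero.1 (add_eq_left.1 hfix)).resolve_left ht

lemma eventually_add_smul_mem_halfspace {f : V →ₗ[ℝ] ℝ} {a : ℝ} {p v : V} (hp : f p ≤ a)
    (htight : f p = a → f v = 0) : ∀ᶠ t : ℝ in 𝓝 0, f (p + t • v) ≤ a := by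
  simp only [map_add, map_smul, smul_eq_mul]
  rcases hp.eq_or_lt with hpa | hpa
  · exact Eventually.of_forall fun t => by simp [hpa, htight hpa]
  · have hcont : Continuous fun t : ℝ => f p + t * f v := by fun_prop
    filter_upwards [hcont.continuousAt.eventually_lt continuousAt_const (by simpa using hpa)]
      with t ht using ht.le

lemma IsPolyhedron.eventually_add_smul_sub_mem_of_mem_minFace {P : Set V}
    (hP : IsPolyhedron V P) {p x : V} (hp : p ∈ P) (hx : x ∈ minFace P p) :
    ∀ᶠ t : ℝ in 𝓝 0, p + t • (x - p) ∈ P := by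
  obtain ⟨k, H, hH, rfl⟩ := hP
  simp only [mem_iInter, eventually_all]
  intro i
  obtain ⟨f, a, hf, hHi⟩ := hH i
  have hsub : ⋂ i, H i ⊆ {y | f y ≤ a} := hHi ▸ iInter_subset H i
  have htight (hpa : f p = a) : f (x - p) = 0 := by
    have hxa : f x = a := mem_iInter.1 (mem_iInter₂.1 (mem_iInter₂.1 hx.2 f a) hf hpa) hsub
    rw [map_sub, hxa, hpa, sub_self]
  rw [hHi]
  exact eventually_add_smul_mem_halfspace (hsub hp) htight

end

theorem extremePoint_of_inter_is_subdivision_vertex_general (d m : ℕ)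
    (P : Fin m → Set (Fin d → ℝ)) (hP : ∀ j, IsPolyhedron (Fin d → ℝ) (P j))
    (S : Finset (Fin m)) (p : Fin d → ℝ)
    (hp : p ∈ Set.extremePoints ℝ (⋂ j ∈ S, P j)) :
    IsSubdivVertex P p := by
  rw [IsSubdivVertex, eq_singleton_iff_unique_mem]
  refine ⟨mem_iInter₂.2 fun j hj => mem_minFace_self hj, fun x hx => ?_⟩
  have hpP : ∀ j ∈ S, p ∈ P j := mem_iInter₂.1 hp.1
  have hline : ∀ᶠ t : ℝ in 𝓝 0, p + t • (x - p) ∈ ⋂ j ∈ S, P j := by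
    simp only [mem_iInter₂, eventually_all_finset]
    exact fun j hj =>
      (hP j).eventually_add_smul_sub_mem_of_mem_minFace (hpP j hj) (mem_iInter₂.1 hx j (hpP j hj))
  exact sub_eq_zero.1 (eq_zero_of_mem_extremePoints_of_eventually_add_smul_mem hp hline)

/-- Every extreme point of the intersection of a nonempty subfamily of
the polyhedra is a vertex of the induced subdivision. -/
theorem extremePoint_of_inter_is_subdivision_vertex (d m : ℕ)
    (P : Fin m → Set (Fin d → ℝ)) (hP : ∀ j, IsPolyhedron (Fin d → ℝ) (P j))
    (S : Finset (Fin m)) (hS : S.Nonempty) (p : Fin d → ℝ)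
    (hp : p ∈ Set.extremePoints ℝ (⋂ j ∈ S, P j)) :
    IsSubdivVertex P p :=
  extremePoint_of_inter_is_subdivision_vertex_general d m P hP S p hp
end

section
/- For every integer d ≥ 1 there exists a constant C > 0 such that the following holds for all integers n ≥ m ≥ 1: given n closed halfspaces in ℝ^d, each assigned one of m colors, and letting P_j be the intersection of the halfspaces of color j, the set ⋃_{S} extremePoints(⋂_{j ∈ S} P_j), where S ranges over all nonempty subsets of the m colors, is finite and has cardinality at most C · m^⌈d/2⌉ · n^⌊d/2⌋. -/
open Set

section Aux
open MeasureTheory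

-- avoidance lemma
lemma exists_forall_not_mem_submodule {E : Type*} [AddCommGroup E] [Module ℝ E]
    [FiniteDimensional ℝ E] {𝒮 : Set (Submodule ℝ E)} (h1 : 𝒮.Finite)
    (h2 : ∀ W ∈ 𝒮, W ≠ ⊤) : ∃ x : E, ∀ W ∈ 𝒮, x ∉ W := by
  classical
  set k := Module.finrank ℝ E
  let e : E ≃ₗ[ℝ] (Fin k → ℝ) := (Module.finBasis ℝ E).equivFun
  have hvol : (volume (⋃ W ∈ 𝒮, (W.map (e : E →ₗ[ℝ] Fin k → ℝ) : Set (Fin k → ℝ)))) = 0 := by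
    refine (measure_biUnion_null_iff h1.countable).2 fun W hW => ?_
    refine Measure.addHaar_submodule _ _ ?_
    intro htop
    apply h2 W hW
    apply Submodule.map_injective_of_injective (f := (e : E →ₗ[ℝ] Fin k → ℝ)) e.injective
    rw [htop, Submodule.map_top]
    exact (LinearMap.range_eq_top.2 e.surjective).symm
  have hne : (⋃ W ∈ 𝒮, (W.map (e : E →ₗ[ℝ] Fin k → ℝ) : Set (Fin k → ℝ))) ≠ univ := by
    intro h
    rw [h] at hvol
    exact (NeZero.ne (volume (univ : Set (Fin k → ℝ)))) (by simpa using hvol)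
  obtain ⟨y, hy⟩ := (ne_univ_iff_exists_notMem _).1 hne
  refine ⟨e.symm y, fun W hW hmem => hy ?_⟩
  refine mem_biUnion hW ?_
  exact ⟨e.symm y, hmem, by simp⟩

variable {d n m : ℕ}

/-- the polyhedron cut out by the halfspaces whose color lies in `S`. -/
def QS (f : Fin n → ((Fin d → ℝ) →ₗ[ℝ] ℝ)) (a : Fin n → ℝ) (color : Fin n → Fin m)
    (S : Finset (Fin m)) : Set (Fin d → ℝ) :=
  {x | ∀ i, color i ∈ S → f i x ≤ a i}

lemma active_span_top (f : Fin n → ((Fin d → ℝ) →ₗ[ℝ] ℝ)) (a : Fin n → ℝ)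
    (color : Fin n → Fin m) (S : Finset (Fin m)) (p : Fin d → ℝ)
    (hp : p ∈ Set.extremePoints ℝ (QS f a color S)) :
    Submodule.span ℝ
      (f '' {i | color i ∈ S ∧ f i p = a i}) = ⊤ := by
  classical
  refine Submodule.span_eq_top_of_ne_zero ?_
  intro z hz
  by_contra hcon
  push_neg at hcon
  have hA : ∀ i, color i ∈ S → f i p = a i → f i z = 0 := by
    intro i h1 h2
    exact hcon (f i) ⟨i, ⟨h1, h2⟩, rfl⟩
  -- the inactive constraints
  set B : Finset (Fin n) := Finset.univ.filter (fun i => color i ∈ S ∧ f i p < a i) with hB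
  set cands : Finset ℝ := insert (1 : ℝ) (B.image fun i => (a i - f i p) / (|f i z| + 1))
    with hcands
  have hcne : cands.Nonempty := ⟨1, Finset.mem_insert_self _ _⟩
  set ε : ℝ := cands.min' hcne with hε
  have hεpos : 0 < ε := by
    have := cands.min'_mem hcne
    rw [← hε] at this
    rw [hcands] at this
    rcases Finset.mem_insert.1 this with h | h
    · rw [h]; norm_num
    · obtain ⟨i, hi, hival⟩ := Finset.mem_image.1 h
      rw [hB] at hi
      have : f i p < a i := (Finset.mem_filter.1 hi).2.2
      rw [← hival]
      apply div_pos (by linarith) (by positivity)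
  have hεle : ∀ i ∈ B, ε ≤ (a i - f i p) / (|f i z| + 1) := by
    intro i hi
    exact Finset.min'_le _ _ (Finset.mem_insert_of_mem (Finset.mem_image_of_mem _ hi))
  have hmem : ∀ c : ℝ, |c| ≤ ε → p + c • z ∈ QS f a color S := by
    intro c hc i hiS
    have hple : f i p ≤ a i := hp.1 i hiS
    rcases eq_or_lt_of_le hple with heq | hlt
    · have : f i z = 0 := hA i hiS heq
      simp [this, heq]
    · have hiB : i ∈ B := by rw [hB]; simp [hiS, hlt]
      have h1 : ε * |f i z| < a i - f i p := by
        calc ε * |f i z| ≤ (a i - f i p) / (|f i z| + 1) * |f i z| := by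
              apply mul_le_mul_of_nonneg_right (hεle i hiB) (abs_nonneg _)
          _ < (a i - f i p) / (|f i z| + 1) * (|f i z| + 1) := by
              apply mul_lt_mul_of_pos_left (by linarith)
                (div_pos (by linarith) (by positivity))
          _ = a i - f i p := by field_simp
      have h2 : c * f i z ≤ ε * |f i z| := by
        calc c * f i z ≤ |c * f i z| := le_abs_self _
          _ = |c| * |f i z| := abs_mul _ _
          _ ≤ ε * |f i z| := mul_le_mul_of_nonneg_right hc (abs_nonneg _)
      have : f i (p + c • z) = f i p + c * f i z := by simp
      rw [this]; linarith
  have h1 : p - ε • z ∈ QS f a color S := by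
    have := hmem (-ε) (by rw [abs_neg, abs_of_pos hεpos])
    rwa [neg_smul, ← sub_eq_add_neg] at this
  have h2 : p + ε • z ∈ QS f a color S := hmem ε (by rw [abs_of_pos hεpos])
  have hseg : p ∈ openSegment ℝ (p - ε • z) (p + ε • z) := by
    refine ⟨1/2, 1/2, by norm_num, by norm_num, by norm_num, by module⟩
  have := (hp.2 h1 h2 hseg)
  have : ε • z = 0 := by
    have h' := congrArg (fun x => x - p) this
    simpa using h'
  rcases smul_eq_zero.1 this with h | h
  · exact absurd h (ne_of_gt hεpos)
  · exact hz h

def FS (f : Fin n → ((Fin d → ℝ) →ₗ[ℝ] ℝ)) (a : Fin n → ℝ) (color : Fin n → Fin m)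
    (T : Finset (Fin n)) (S' : Finset (Fin m)) : Set (Fin d → ℝ) :=
  {x | (∀ i, color i ∈ S' → f i x ≤ a i) ∧ ∀ t ∈ T, f t x = a t}

lemma cert_exists (f : Fin n → ((Fin d → ℝ) →ₗ[ℝ] ℝ)) (a : Fin n → ℝ)
    (color : Fin n → Fin m) (φ : (Fin d → ℝ) →ₗ[ℝ] ℝ)
    (hφ : ∀ s : Set ((Fin d → ℝ) →ₗ[ℝ] ℝ), s ⊆ Set.range f →
      Submodule.span ℝ s ≠ ⊤ → φ ∉ Submodule.span ℝ s)
    (S : Finset (Fin m)) (p : Fin d → ℝ)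
    (hp : p ∈ Set.extremePoints ℝ (QS f a color S)) :
    ∃ (s : ℝ) (T : Finset (Fin n)) (S' : Finset (Fin m)),
      (s = 1 ∨ s = -1) ∧ T.card ≤ d / 2 ∧ S'.card ≤ (d + 1) / 2 ∧
      p ∈ FS f a color T S' ∧
      ∀ q ∈ FS f a color T S', q ≠ p → s * φ p < s * φ q := by
  classical
  set Act : Set (Fin n) := {i | color i ∈ S ∧ f i p = a i} with hAct
  have hspan := active_span_top f a color S p hp
  obtain ⟨t, hts, htspan, htli⟩ := exists_linearIndependent ℝ (f '' Act)
  rw [hspan] at htspan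
  have htfin : t.Finite := htli.setFinite
  haveI : Fintype t := htfin.fintype
  let b : Module.Basis t ℝ ((Fin d → ℝ) →ₗ[ℝ] ℝ) :=
    Module.Basis.mk htli (by rw [Subtype.range_coe, htspan])
  have hb : ∀ g : t, b g = (g : (Fin d → ℝ) →ₗ[ℝ] ℝ) := fun g => by
    simp [b, Module.Basis.coe_mk]
  have hcardt : Fintype.card t = d := by
    rw [← Module.finrank_eq_card_basis b, Subspace.dual_finrank_eq,
      Module.finrank_fin_fun]
  -- index choice
  have hidx : ∀ g : t, ∃ i : Fin n, i ∈ Act ∧ f i = (g : _) := by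
    intro g
    obtain ⟨i, hi, hfi⟩ := hts g.2
    exact ⟨i, hi, hfi⟩
  choose idx hidxAct hidxf using hidx
  -- coefficients
  set c : t → ℝ := fun g => b.repr φ g with hc
  have hrepr : ∑ g : t, c g • (g : (Fin d → ℝ) →ₗ[ℝ] ℝ) = φ := by
    conv_rhs => rw [← b.sum_repr φ]
    refine Finset.sum_congr rfl fun g _ => by rw [hb]
  have hcne : ∀ g : t, c g ≠ 0 := by
    intro g₀ hg0
    have hsub : (t \ {(g₀ : (Fin d → ℝ) →ₗ[ℝ] ℝ)}) ⊆ Set.range f := by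
      intro x hx
      obtain ⟨i, -, hfi⟩ := hts hx.1
      exact ⟨i, hfi⟩
    have himg : (Subtype.val '' {g : t | g ≠ g₀}) = t \ {(g₀ : (Fin d → ℝ) →ₗ[ℝ] ℝ)} := by
      ext x
      constructor
      · rintro ⟨g, hg, rfl⟩
        exact ⟨g.2, by simpa [Subtype.ext_iff] using hg⟩
      · rintro ⟨hxt, hx⟩
        exact ⟨⟨x, hxt⟩, by simpa [Subtype.ext_iff] using hx, rfl⟩
    have hne : Submodule.span ℝ (t \ {(g₀ : (Fin d → ℝ) →ₗ[ℝ] ℝ)}) ≠ ⊤ := by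
      intro hteq
      have := htli.notMem_span_image (s := {g : t | g ≠ g₀}) (x := g₀) (by simp)
      rw [himg, hteq] at this
      exact this trivial
    refine hφ _ hsub hne ?_
    rw [← hrepr]
    refine Submodule.sum_mem _ fun g _ => ?_
    by_cases hgg : g = g₀
    · subst hgg; rw [hg0]; simp
    · refine Submodule.smul_mem _ _ (Submodule.subset_span ⟨g.2, ?_⟩)
      simpa [Subtype.ext_iff] using hgg
  -- sign split
  set Pos : Finset t := Finset.univ.filter (fun g => 0 < c g) with hPos
  set Neg : Finset t := Finset.univ.filter (fun g => c g < 0) with hNeg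
  have hPN : ∀ g : t, g ∈ Pos ∨ g ∈ Neg := by
    intro g
    rcases lt_or_gt_of_ne (hcne g) with h | h
    · right; simp [hNeg, h]
    · left; simp [hPos, h]
  have hdisj : Disjoint Pos Neg := by
    rw [Finset.disjoint_left]
    intro g hg1 hg2
    rw [hPos, Finset.mem_filter] at hg1
    rw [hNeg, Finset.mem_filter] at hg2
    linarith [hg1.2, hg2.2]
  have hcards : Pos.card + Neg.card = d := by
    have huniv : Pos ∪ Neg = Finset.univ := by ext g; simpa using hPN g
    rw [← Finset.card_union_of_disjoint hdisj, huniv, Finset.card_univ, hcardt]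
  -- main claim, symmetric in sign
  suffices claim : ∀ (s : ℝ) (Min Maj : Finset t), (s = 1 ∨ s = -1) →
      (∀ g : t, g ∈ Min ∨ g ∈ Maj) → Min.card + Maj.card = d → Min.card ≤ Maj.card →
      (∀ g ∈ Maj, s * c g < 0) →
      ∃ (T : Finset (Fin n)) (S' : Finset (Fin m)),
        T.card ≤ d / 2 ∧ S'.card ≤ (d + 1) / 2 ∧
        p ∈ FS f a color T S' ∧
        ∀ q ∈ FS f a color T S', q ≠ p → s * φ p < s * φ q by
    rcases le_total Pos.card Neg.card with hle | hle
    · obtain ⟨T, S', h1, h2, h3, h4⟩ := claim 1 Pos Neg (Or.inl rfl) hPN hcards hle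
        (fun g hg => by rw [hNeg, Finset.mem_filter] at hg; simpa using hg.2)
      exact ⟨1, T, S', Or.inl rfl, h1, h2, h3, h4⟩
    · obtain ⟨T, S', h1, h2, h3, h4⟩ := claim (-1) Neg Pos (Or.inr rfl)
        (fun g => (hPN g).symm) (by omega) hle
        (fun g hg => by rw [hPos, Finset.mem_filter] at hg; simpa using hg.2)
      exact ⟨-1, T, S', Or.inr rfl, h1, h2, h3, h4⟩
  intro s Min Maj hs hcover hsum hle hneg
  obtain ⟨J', hJ'sub, hJ'card⟩ := Finset.exists_subset_card_eq (s := Maj) (n := (d + 1) / 2) (by omega)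
  refine ⟨(Min ∪ (Maj \ J')).image (fun g => idx g),
    J'.image (fun g => color (idx g)), ?_, ?_, ?_, ?_⟩
  · calc ((Min ∪ (Maj \ J')).image (fun g => idx g)).card
        ≤ (Min ∪ (Maj \ J')).card := Finset.card_image_le
      _ ≤ Min.card + (Maj \ J').card := Finset.card_union_le _ _
      _ = Min.card + (Maj.card - J'.card) := by rw [Finset.card_sdiff_of_subset hJ'sub]
      _ ≤ d / 2 := by
          have := Finset.card_le_card hJ'sub
          omega
  · calc (J'.image (fun g => color (idx g))).card ≤ J'.card := Finset.card_image_le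
      _ = (d + 1) / 2 := hJ'card
  · constructor
    · intro i hi
      obtain ⟨g, hg, hcol⟩ := Finset.mem_image.1 hi
      -- color i = color (idx g) ∈ S
      have : color i ∈ S := by rw [← hcol]; exact (hidxAct g).1
      exact hp.1 i this
    · intro j hj
      obtain ⟨g, hg, rfl⟩ := Finset.mem_image.1 hj
      exact (hidxAct g).2
  · intro q hq hqp
    -- values of the basis functionals on v = q - p
    have hvzero : ∀ g : t, g ∈ Min ∪ (Maj \ J') → (g : (Fin d → ℝ) →ₗ[ℝ] ℝ) (q - p) = 0 := by
      intro g hg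
      have hqg : f (idx g) q = a (idx g) :=
        hq.2 (idx g) (Finset.mem_image_of_mem _ hg)
      have hpg : f (idx g) p = a (idx g) := (hidxAct g).2
      rw [← hidxf g, map_sub, hqg, hpg, sub_self]
    have hvle : ∀ g : t, g ∈ J' → (g : (Fin d → ℝ) →ₗ[ℝ] ℝ) (q - p) ≤ 0 := by
      intro g hg
      have hqg : f (idx g) q ≤ a (idx g) :=
        hq.1 (idx g) (Finset.mem_image_of_mem _ hg)
      have hpg : f (idx g) p = a (idx g) := (hidxAct g).2
      rw [← hidxf g, map_sub, hpg]
      linarith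
    -- some functional is nonzero on v
    have hvne : ∃ g : t, (g : (Fin d → ℝ) →ₗ[ℝ] ℝ) (q - p) ≠ 0 := by
      by_contra hall
      push_neg at hall
      apply hqp
      have hzero : ∀ ψ : (Fin d → ℝ) →ₗ[ℝ] ℝ, ψ (q - p) = 0 := by
        intro ψ
        have hψ : ψ ∈ Submodule.span ℝ t := by rw [htspan]; trivial
        induction hψ using Submodule.span_induction with
        | mem x hx => exact hall ⟨x, hx⟩
        | zero => simp
        | add x y _ _ hx hy => simp [LinearMap.add_apply, hx, hy]
        | smul r x _ hx => simp [LinearMap.smul_apply, hx]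
      have := (Module.forall_dual_apply_eq_zero_iff ℝ (q - p)).1 hzero
      exact sub_eq_zero.1 this
    obtain ⟨g₀, hg₀⟩ := hvne
    have hg₀J' : g₀ ∈ J' := by
      by_contra hgJ
      apply hg₀
      apply hvzero
      rcases hcover g₀ with h | h
      · exact Finset.mem_union_left _ h
      · exact Finset.mem_union_right _ (Finset.mem_sdiff.2 ⟨h, hgJ⟩)
    -- the sum computation
    have hsumval : s * φ q - s * φ p
        = ∑ g : t, s * c g * ((g : (Fin d → ℝ) →ₗ[ℝ] ℝ) (q - p)) := by
      have h1 : φ (q - p) = ∑ g : t, c g * ((g : (Fin d → ℝ) →ₗ[ℝ] ℝ) (q - p)) := by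
        conv_lhs => rw [← hrepr]
        rw [LinearMap.sum_apply]
        refine Finset.sum_congr rfl fun g _ => ?_
        rw [LinearMap.smul_apply, smul_eq_mul]
      rw [← mul_sub, ← map_sub, h1, Finset.mul_sum]
      exact Finset.sum_congr rfl fun g _ => by ring
    have hterms : ∀ g ∈ (Finset.univ : Finset t),
        0 ≤ s * c g * ((g : (Fin d → ℝ) →ₗ[ℝ] ℝ) (q - p)) := by
      intro g _
      by_cases hgJ : g ∈ J'
      · have h1 := le_of_lt (hneg g (hJ'sub hgJ))
        have h2 := hvle g hgJ
        nlinarith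
      · have : (g : (Fin d → ℝ) →ₗ[ℝ] ℝ) (q - p) = 0 := by
          apply hvzero
          rcases hcover g with h | h
          · exact Finset.mem_union_left _ h
          · exact Finset.mem_union_right _ (Finset.mem_sdiff.2 ⟨h, hgJ⟩)
        rw [this, mul_zero]
    have hpos : 0 < ∑ g : t, s * c g * ((g : (Fin d → ℝ) →ₗ[ℝ] ℝ) (q - p)) := by
      refine Finset.sum_pos' hterms ⟨g₀, Finset.mem_univ _, ?_⟩
      have h1 : s * c g₀ < 0 := hneg g₀ (hJ'sub hg₀J')
      have h2 : (g₀ : (Fin d → ℝ) →ₗ[ℝ] ℝ) (q - p) < 0 :=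
        lt_of_le_of_ne (hvle g₀ hg₀J') hg₀
      exact mul_pos_of_neg_of_neg h1 h2
    linarith [hsumval, hpos]


lemma count_small_subsets (N k : ℕ) (hN : 1 ≤ N) :
    ((Finset.univ : Finset (Finset (Fin N))).filter fun T => T.card ≤ k).card
      ≤ (k + 1) * N ^ k := by
  classical
  have hsub : ((Finset.univ : Finset (Finset (Fin N))).filter fun T => T.card ≤ k)
      ⊆ (Finset.range (k + 1)).biUnion
        (fun j => (Finset.univ : Finset (Fin N)).powersetCard j) := by
    intro T hT
    rw [Finset.mem_filter] at hT
    refine Finset.mem_biUnion.2 ⟨T.card, Finset.mem_range.2 (by omega), ?_⟩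
    exact Finset.mem_powersetCard.2 ⟨Finset.subset_univ _, rfl⟩
  calc ((Finset.univ : Finset (Finset (Fin N))).filter fun T => T.card ≤ k).card
      ≤ _ := Finset.card_le_card hsub
    _ ≤ ∑ j ∈ Finset.range (k + 1),
          ((Finset.univ : Finset (Fin N)).powersetCard j).card :=
        Finset.card_biUnion_le
    _ ≤ ∑ j ∈ Finset.range (k + 1), N ^ k := by
        refine Finset.sum_le_sum fun j hj => ?_
        rw [Finset.card_powersetCard, Finset.card_univ, Fintype.card_fin]
        calc N.choose j ≤ N ^ j := Nat.choose_le_pow N j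
          _ ≤ N ^ k := Nat.pow_le_pow_right hN (by
              have := Finset.mem_range.1 hj; omega)
    _ = (k + 1) * N ^ k := by rw [Finset.sum_const, Finset.card_range, smul_eq_mul]

end Aux


/-- Vertex-counting form of the main upper bound: the union over all
nonempty color subsets S of the extreme points of ⋂_{j ∈ S} P_j has
O(m^⌈d/2⌉ n^⌊d/2⌋) elements. -/

theorem union_extremePoints_upper_bound (d : ℕ) (hd : 1 ≤ d) :
    ∃ C : ℕ, 0 < C ∧
      ∀ (n m : ℕ), 1 ≤ m → m ≤ n →
        ∀ (H : Fin n → Set (Fin d → ℝ)) (color : Fin n → Fin m),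
          (∀ i, IsClosedHalfspace (Fin d → ℝ) (H i)) →
          (⋃ (S : Finset (Fin m)) (_ : S.Nonempty),
              Set.extremePoints ℝ
                (⋂ j ∈ S, ⋂ i ∈ {i | color i = j}, H i)).Finite ∧
          (⋃ (S : Finset (Fin m)) (_ : S.Nonempty),
              Set.extremePoints ℝ
                (⋂ j ∈ S, ⋂ i ∈ {i | color i = j}, H i)).ncard
            ≤ C * m ^ ((d + 1) / 2) * n ^ (d / 2) := by
  classical
  refine ⟨2 * (d / 2 + 1) * ((d + 1) / 2 + 1), by positivity, ?_⟩
  intro n m hm hmn H color hH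
  choose f a hf0 hHeq using hH
  -- rewrite the polyhedra
  have hQS : ∀ S : Finset (Fin m),
      (⋂ j ∈ S, ⋂ i ∈ {i | color i = j}, H i) = QS f a color S := by
    intro S
    ext x
    simp only [Set.mem_iInter, Set.mem_setOf_eq, QS]
    constructor
    · intro h i hci
      have := h (color i) hci i rfl
      rw [hHeq i] at this
      exact this
    · intro h j hj i hci
      rw [hHeq i]
      exact h i (hci ▸ hj)
  set Φ := ⋃ (S : Finset (Fin m)) (_ : S.Nonempty),
      Set.extremePoints ℝ (⋂ j ∈ S, ⋂ i ∈ {i | color i = j}, H i) with hΦ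
  -- generic functional
  obtain ⟨φ, hφ⟩ : ∃ φ : (Fin d → ℝ) →ₗ[ℝ] ℝ,
      ∀ s : Set ((Fin d → ℝ) →ₗ[ℝ] ℝ), s ⊆ Set.range f →
        Submodule.span ℝ s ≠ ⊤ → φ ∉ Submodule.span ℝ s := by
    set 𝒮 : Set (Submodule ℝ ((Fin d → ℝ) →ₗ[ℝ] ℝ)) :=
      {W | (∃ s : Set ((Fin d → ℝ) →ₗ[ℝ] ℝ), s ⊆ Set.range f ∧ W = Submodule.span ℝ s)
        ∧ W ≠ ⊤} with h𝒮
    have h1 : 𝒮.Finite := by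
      have hr : (Set.range f).Finite := Set.finite_range f
      have h2 := hr.finite_subsets
      have : 𝒮 ⊆ (fun s : Set ((Fin d → ℝ) →ₗ[ℝ] ℝ) => Submodule.span ℝ s) ''
          {s | s ⊆ Set.range f} := by
        rintro W ⟨⟨s, hs1, rfl⟩, -⟩
        exact ⟨s, hs1, rfl⟩
      exact (h2.image _).subset this
    have h2 : ∀ W ∈ 𝒮, W ≠ ⊤ := fun W hW => hW.2
    obtain ⟨φ, hφ⟩ := exists_forall_not_mem_submodule h1 h2
    exact ⟨φ, fun s hs hne => hφ _ ⟨⟨s, hs, rfl⟩, hne⟩⟩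
  -- certificate predicate
  set Cert : (Fin d → ℝ) → Bool × Finset (Fin n) × Finset (Fin m) → Prop :=
    fun p x =>
      x.2.1.card ≤ d / 2 ∧ x.2.2.card ≤ (d + 1) / 2 ∧
      p ∈ FS f a color x.2.1 x.2.2 ∧
      ∀ q ∈ FS f a color x.2.1 x.2.2, q ≠ p →
        (cond x.1 (1 : ℝ) (-1)) * φ p < (cond x.1 (1 : ℝ) (-1)) * φ q with hCert
  have hex : ∀ p ∈ Φ, ∃ x, Cert p x := by
    intro p hp
    rw [hΦ] at hp
    obtain ⟨S, hS⟩ := Set.mem_iUnion.1 hp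
    obtain ⟨hSne, hpS⟩ := Set.mem_iUnion.1 hS
    rw [hQS S] at hpS
    obtain ⟨s, T, S', hs, hT, hS', hp1, hp2⟩ := cert_exists f a color φ hφ S p hpS
    refine ⟨⟨if s = 1 then true else false, T, S'⟩, hT, hS', ?_, ?_⟩
    · exact hp1
    · intro q hq hqp
      have : (cond (if s = 1 then true else false) (1 : ℝ) (-1)) = s := by
        rcases hs with h | h
        · simp [h]
        · have hs1 : s ≠ 1 := by rw [h]; norm_num
          rw [if_neg hs1, h]
          norm_num
      rw [this]
      exact hp2 q hq hqp
  have huniq : ∀ x p p', Cert p x → Cert p' x → p = p' := by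
    rintro x p p' ⟨-, -, hp1, hp2⟩ ⟨-, -, hp'1, hp'2⟩
    by_contra hne
    have h1 := hp2 p' hp'1 (Ne.symm hne)
    have h2 := hp'2 p hp1 hne
    linarith
  -- the injection
  set g : (Fin d → ℝ) → Bool × Finset (Fin n) × Finset (Fin m) :=
    fun p => if h : ∃ x, Cert p x then h.choose else ⟨true, ∅, ∅⟩ with hg
  have hgspec : ∀ p ∈ Φ, Cert p (g p) := by
    intro p hp
    have h := hex p hp
    simp only [hg, dif_pos h]
    exact h.choose_spec
  have hinj : Set.InjOn g Φ := by
    intro p hp p' hp' heq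
    have h1 := hgspec p hp
    have h2 := hgspec p' hp'
    rw [heq] at h1
    exact huniq (g p') p p' h1 h2
  set B : Finset (Bool × Finset (Fin n) × Finset (Fin m)) :=
    Finset.univ.filter (fun x => x.2.1.card ≤ d / 2 ∧ x.2.2.card ≤ (d + 1) / 2) with hB
  have himg : g '' Φ ⊆ ↑B := by
    rintro y ⟨p, hp, rfl⟩
    obtain ⟨h1, h2, -, -⟩ := hgspec p hp
    simp only [hB, Finset.coe_filter, Set.mem_setOf_eq, Finset.mem_univ, true_and]
    exact ⟨h1, h2⟩
  have hfin : Φ.Finite :=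
    Set.Finite.of_finite_image (B.finite_toSet.subset himg) hinj
  refine ⟨hfin, ?_⟩
  have hcard1 : Φ.ncard ≤ B.card := by
    calc Φ.ncard = (g '' Φ).ncard := (Set.ncard_image_of_injOn hinj).symm
      _ ≤ (↑B : Set _).ncard := Set.ncard_le_ncard himg B.finite_toSet
      _ = B.card := Set.ncard_coe_finset B
  -- bound on B.card
  have hcard2 : B.card ≤ 2 * ((d / 2 + 1) * n ^ (d / 2)) * (((d + 1) / 2 + 1) * m ^ ((d + 1) / 2)) := by
    have hsub : B ⊆ (Finset.univ : Finset Bool) ×ˢ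
        ((Finset.univ.filter fun T : Finset (Fin n) => T.card ≤ d / 2) ×ˢ
          (Finset.univ.filter fun S' : Finset (Fin m) => S'.card ≤ (d + 1) / 2)) := by
      intro x hx
      rw [hB, Finset.mem_filter] at hx
      rw [Finset.mem_product, Finset.mem_product]
      refine ⟨Finset.mem_univ _, ?_, ?_⟩ <;>
        simp [Finset.mem_filter, hx.2.1, hx.2.2]
    calc B.card ≤ _ := Finset.card_le_card hsub
      _ = 2 * ((Finset.univ.filter fun T : Finset (Fin n) => T.card ≤ d / 2).card *
          (Finset.univ.filter fun S' : Finset (Fin m) => S'.card ≤ (d + 1) / 2).card) := by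
          rw [Finset.card_product, Finset.card_product, Finset.card_univ, Fintype.card_bool]
      _ ≤ 2 * (((d / 2 + 1) * n ^ (d / 2)) * (((d + 1) / 2 + 1) * m ^ ((d + 1) / 2))) := by
          apply Nat.mul_le_mul_left
          exact Nat.mul_le_mul (count_small_subsets n (d / 2) (le_trans hm hmn))
            (count_small_subsets m ((d + 1) / 2) hm)
      _ = 2 * ((d / 2 + 1) * n ^ (d / 2)) * (((d + 1) / 2 + 1) * m ^ ((d + 1) / 2)) := by ring
  calc Φ.ncard ≤ _ := hcard1
    _ ≤ _ := hcard2
    _ = 2 * (d / 2 + 1) * ((d + 1) / 2 + 1) * m ^ ((d + 1) / 2) * n ^ (d / 2) := by ring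
end
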